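/- arXiv:math/0505273 — 2 statements merged into one kernel-verified Lean document; each statement's English description precedes it below -/
import Mathlib

section
/- Let ν and ρ be Young diagrams, and let ν ∪ ρ and ν ∩ ρ denote their cellwise union and intersection (which are again Young diagrams). Then there exists an injective map from pairs (T,U), where T is a semistandard Young tableau of shape ν and U is a semistandard Young tableau of shape ρ, to pairs (T',U') where T' is a semistandard Young tableau of shape ν ∪ ρ and U' is a semistandard Young tableau of shape ν ∩ ρ, which is weight-preserving: for every value n, the number of cells of T with entry n plus the number of cells of U with entry n equals the number of cells of T' with entry n plus the number of cells of U' with entry n. Consequently s_{ν∪ρ} s_{ν∩ρ} − s_ν s_ρ is monomial-positive. -/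
/-- An order ideal: a Young diagram is a finite order ideal of `ℕ × ℕ`
(componentwise order). -/
def IsOrderIdeal (I : Set (ℕ × ℕ)) : Prop := ∀ ⦃s t : ℕ × ℕ⦄, s ∈ I → t ≤ s → t ∈ I

/-- A semistandard filling of a set `D` of cells `(i,j)` (row `i`, column `j`)
with values in a linearly ordered type: weakly increasing along rows, strictly
increasing down columns. -/
def IsSSYT {α : Type*} [Preorder α] (D : Set (ℕ × ℕ)) (T : D → α) : Prop :=
  (∀ c c' : D, (c : ℕ × ℕ).1 = (c' : ℕ × ℕ).1 → (c : ℕ × ℕ).2 + 1 = (c' : ℕ × ℕ).2 →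
      T c ≤ T c') ∧
    (∀ c c' : D, (c : ℕ × ℕ).1 + 1 = (c' : ℕ × ℕ).1 → (c : ℕ × ℕ).2 = (c' : ℕ × ℕ).2 →
      T c < T c')

/-- The weight `wt(T)(n) = #T⁻¹(n)` of a filling. -/
noncomputable def wtFun {α β : Type*} (T : α → β) (n : β) : ℕ :=
  Nat.card {x : α // T x = n}

namespace CT

open Classical

/-- SSYT condition for a total function, restricted to a set of cells. -/
def goodOn (D : Set (ℕ × ℕ)) (f : ℕ × ℕ → ℕ) : Prop :=
  (∀ i j, (i, j) ∈ D → (i, j + 1) ∈ D → f (i, j) ≤ f (i, j + 1)) ∧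
    (∀ i j, (i, j) ∈ D → (i + 1, j) ∈ D → f (i, j) < f (i + 1, j))

variable (ν ρ : Set (ℕ × ℕ)) (t u : ℕ × ℕ → ℕ)

/-- the small value at a cell -/
noncomputable def lo (x : ℕ × ℕ) : ℕ :=
  if x ∈ ρ then (if x ∈ ν then min (t x) (u x) else u x) else t x

/-- the big value at a cell -/
noncomputable def hi (x : ℕ × ℕ) : ℕ :=
  if x ∈ ρ then (if x ∈ ν then max (t x) (u x) else u x) else t x

/-- A "rigid" covering edge: one whose endpoints must have the same swap status. -/
def Rigid (x y : ℕ × ℕ) : Prop :=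
  x ∈ ν ∪ ρ ∧ y ∈ ν ∪ ρ ∧
    ((y = (x.1, x.2 + 1) ∧ lo ν ρ t u y < hi ν ρ t u x) ∨
      (y = (x.1 + 1, x.2) ∧ lo ν ρ t u y ≤ hi ν ρ t u x))

def RigidAdj (x y : ℕ × ℕ) : Prop := Rigid ν ρ t u x y ∨ Rigid ν ρ t u y x

/-- Swapped cells: those connected by a rigid path to a cell of `ρ \ ν`. -/
def Swapped (c : ℕ × ℕ) : Prop :=
  ∃ b ∈ ρ \ ν, Relation.ReflTransGen (RigidAdj ν ρ t u) c b

noncomputable def tOut (x : ℕ × ℕ) : ℕ := if Swapped ν ρ t u x then u x else t x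

noncomputable def uOut (x : ℕ × ℕ) : ℕ := if Swapped ν ρ t u x then t x else u x

/-- "T is strictly bigger here, or we are in ρ\ν" -/
def Ph (x : ℕ × ℕ) : Prop := (x ∈ ν ∩ ρ ∧ u x < t x) ∨ x ∈ ρ \ ν

/-- "U is strictly bigger here, or we are in ν\ρ" -/
def Qh (x : ℕ × ℕ) : Prop := (x ∈ ν ∩ ρ ∧ t x < u x) ∨ x ∈ ν \ ρ

variable {ν ρ t u}

theorem Ph_Qh_disjoint {x : ℕ × ℕ} (hp : Ph ν ρ t u x) (hq : Qh ν ρ t u x) : False := by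
  rcases hp with ⟨⟨h1, h2⟩, h3⟩ | ⟨h1, h2⟩ <;> rcases hq with ⟨⟨g1, g2⟩, g3⟩ | ⟨g1, g2⟩
  · omega
  · exact g2 h2
  · exact h2 g1
  · exact h2 g1

theorem rigid_class (hν : IsOrderIdeal ν) (hρ : IsOrderIdeal ρ)
    (ht : goodOn ν t) (hu : goodOn ρ u) {x y : ℕ × ℕ} (h : Rigid ν ρ t u x y) :
    (Ph ν ρ t u x ∧ Ph ν ρ t u y) ∨ (Qh ν ρ t u x ∧ Qh ν ρ t u y) := by
  obtain ⟨i, j⟩ := x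
  obtain ⟨hx, hy, hcase⟩ := h
  dsimp only at hcase hy
  rcases hcase with ⟨rfl, hr⟩ | ⟨rfl, hr⟩
  · -- row edge, rigid: lo y < hi x
    by_cases hyρ : (i, j + 1) ∈ ρ <;> by_cases hyν : (i, j + 1) ∈ ν
    · have hxρ : (i, j) ∈ ρ := hρ hyρ (Prod.mk_le_mk.mpr ⟨le_rfl, by omega⟩)
      have hxν : (i, j) ∈ ν := hν hyν (Prod.mk_le_mk.mpr ⟨le_rfl, by omega⟩)
      rw [lo, if_pos hyρ, if_pos hyν, hi, if_pos hxρ, if_pos hxν] at hr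
      have h1 := ht.1 i j hxν hyν
      have h2 := hu.1 i j hxρ hyρ
      have : (u (i, j) < t (i, j) ∧ u (i, j + 1) < t (i, j + 1)) ∨
          (t (i, j) < u (i, j) ∧ t (i, j + 1) < u (i, j + 1)) := by omega
      rcases this with ⟨a1, a2⟩ | ⟨a1, a2⟩
      · exact Or.inl ⟨Or.inl ⟨⟨hxν, hxρ⟩, a1⟩, Or.inl ⟨⟨hyν, hyρ⟩, a2⟩⟩
      · exact Or.inr ⟨Or.inl ⟨⟨hxν, hxρ⟩, a1⟩, Or.inl ⟨⟨hyν, hyρ⟩, a2⟩⟩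
    · -- y ∈ ρ \ ν
      have hxρ : (i, j) ∈ ρ := hρ hyρ (Prod.mk_le_mk.mpr ⟨le_rfl, by omega⟩)
      rw [lo, if_pos hyρ, if_neg hyν, hi, if_pos hxρ] at hr
      by_cases hxν : (i, j) ∈ ν
      · rw [if_pos hxν] at hr
        have h2 := hu.1 i j hxρ hyρ
        have : u (i, j) < t (i, j) := by omega
        exact Or.inl ⟨Or.inl ⟨⟨hxν, hxρ⟩, this⟩, Or.inr ⟨hyρ, hyν⟩⟩
      · rw [if_neg hxν] at hr
        exact absurd (hu.1 i j hxρ hyρ) (by omega)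
    · -- y ∈ ν \ ρ
      have hxν : (i, j) ∈ ν := hν hyν (Prod.mk_le_mk.mpr ⟨le_rfl, by omega⟩)
      rw [lo, if_neg hyρ, hi] at hr
      by_cases hxρ : (i, j) ∈ ρ
      · rw [if_pos hxρ, if_pos hxν] at hr
        have h1 := ht.1 i j hxν hyν
        have : t (i, j) < u (i, j) := by omega
        exact Or.inr ⟨Or.inl ⟨⟨hxν, hxρ⟩, this⟩, Or.inr ⟨hyν, hyρ⟩⟩
      · rw [if_neg hxρ] at hr
        exact absurd (ht.1 i j hxν hyν) (by omega)
    · exact absurd hy (by simp [hyν, hyρ])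
  · -- column edge, rigid : lo y ≤ hi x
    by_cases hyρ : (i + 1, j) ∈ ρ <;> by_cases hyν : (i + 1, j) ∈ ν
    · have hxρ : (i, j) ∈ ρ := hρ hyρ (Prod.mk_le_mk.mpr ⟨by omega, le_rfl⟩)
      have hxν : (i, j) ∈ ν := hν hyν (Prod.mk_le_mk.mpr ⟨by omega, le_rfl⟩)
      rw [lo, if_pos hyρ, if_pos hyν, hi, if_pos hxρ, if_pos hxν] at hr
      have h1 := ht.2 i j hxν hyν
      have h2 := hu.2 i j hxρ hyρ
      have : (u (i, j) < t (i, j) ∧ u (i + 1, j) < t (i + 1, j)) ∨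
          (t (i, j) < u (i, j) ∧ t (i + 1, j) < u (i + 1, j)) := by omega
      rcases this with ⟨a1, a2⟩ | ⟨a1, a2⟩
      · exact Or.inl ⟨Or.inl ⟨⟨hxν, hxρ⟩, a1⟩, Or.inl ⟨⟨hyν, hyρ⟩, a2⟩⟩
      · exact Or.inr ⟨Or.inl ⟨⟨hxν, hxρ⟩, a1⟩, Or.inl ⟨⟨hyν, hyρ⟩, a2⟩⟩
    · have hxρ : (i, j) ∈ ρ := hρ hyρ (Prod.mk_le_mk.mpr ⟨by omega, le_rfl⟩)
      rw [lo, if_pos hyρ, if_neg hyν, hi, if_pos hxρ] at hr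
      by_cases hxν : (i, j) ∈ ν
      · rw [if_pos hxν] at hr
        have h2 := hu.2 i j hxρ hyρ
        have : u (i, j) < t (i, j) := by omega
        exact Or.inl ⟨Or.inl ⟨⟨hxν, hxρ⟩, this⟩, Or.inr ⟨hyρ, hyν⟩⟩
      · rw [if_neg hxν] at hr
        exact absurd (hu.2 i j hxρ hyρ) (by omega)
    · have hxν : (i, j) ∈ ν := hν hyν (Prod.mk_le_mk.mpr ⟨by omega, le_rfl⟩)
      rw [lo, if_neg hyρ, hi] at hr
      by_cases hxρ : (i, j) ∈ ρ
      · rw [if_pos hxρ, if_pos hxν] at hr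
        have h1 := ht.2 i j hxν hyν
        have : t (i, j) < u (i, j) := by omega
        exact Or.inr ⟨Or.inl ⟨⟨hxν, hxρ⟩, this⟩, Or.inr ⟨hyν, hyρ⟩⟩
      · rw [if_neg hxρ] at hr
        exact absurd (ht.2 i j hxν hyν) (by omega)
    · exact absurd hy (by simp [hyν, hyρ])

theorem rigidAdj_class (hν : IsOrderIdeal ν) (hρ : IsOrderIdeal ρ)
    (ht : goodOn ν t) (hu : goodOn ρ u) {x y : ℕ × ℕ} (h : RigidAdj ν ρ t u x y) :
    (Ph ν ρ t u x ∧ Ph ν ρ t u y) ∨ (Qh ν ρ t u x ∧ Qh ν ρ t u y) := by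
  rcases h with h | h
  · exact rigid_class hν hρ ht hu h
  · rcases rigid_class hν hρ ht hu h with ⟨h1, h2⟩ | ⟨h1, h2⟩
    · exact Or.inl ⟨h2, h1⟩
    · exact Or.inr ⟨h2, h1⟩

theorem chain_class (hν : IsOrderIdeal ν) (hρ : IsOrderIdeal ρ)
    (ht : goodOn ν t) (hu : goodOn ρ u) {x y : ℕ × ℕ}
    (h : Relation.ReflTransGen (RigidAdj ν ρ t u) x y) :
    x = y ∨ (Ph ν ρ t u x ∧ Ph ν ρ t u y) ∨ (Qh ν ρ t u x ∧ Qh ν ρ t u y) := by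
  induction h with
  | refl => exact Or.inl rfl
  | @tail b c hxb hbc ih =>
    have hstep := rigidAdj_class hν hρ ht hu hbc
    rcases ih with rfl | ⟨p1, p2⟩ | ⟨q1, q2⟩
    · exact Or.inr hstep
    · rcases hstep with ⟨s1, s2⟩ | ⟨s1, s2⟩
      · exact Or.inr (Or.inl ⟨p1, s2⟩)
      · exact absurd p2 (fun hp => Ph_Qh_disjoint hp s1)
    · rcases hstep with ⟨s1, s2⟩ | ⟨s1, s2⟩
      · exact absurd q2 (fun hq => Ph_Qh_disjoint s1 hq)
      · exact Or.inr (Or.inr ⟨q1, s2⟩)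

theorem swapped_mem (hν : IsOrderIdeal ν) (hρ : IsOrderIdeal ρ)
    (ht : goodOn ν t) (hu : goodOn ρ u) {x : ℕ × ℕ} (h : Swapped ν ρ t u x) : x ∈ ρ := by
  obtain ⟨b, hb, hpath⟩ := h
  rcases chain_class hν hρ ht hu hpath with rfl | ⟨p1, _⟩ | ⟨_, q2⟩
  · exact hb.1
  · rcases p1 with ⟨⟨_, h2⟩, _⟩ | ⟨h1, _⟩
    · exact h2
    · exact h1
  · rcases q2 with ⟨⟨g1, _⟩, _⟩ | ⟨h1, h2⟩
    · exact absurd g1 hb.2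
    · exact absurd hb.1 h2

theorem not_swapped_A (hν : IsOrderIdeal ν) (hρ : IsOrderIdeal ρ)
    (ht : goodOn ν t) (hu : goodOn ρ u) {x : ℕ × ℕ} (hx : x ∈ ν) (hx' : x ∉ ρ) :
    ¬ Swapped ν ρ t u x := fun h => hx' (swapped_mem hν hρ ht hu h)

theorem swapped_B {x : ℕ × ℕ} (hx : x ∈ ρ) (hx' : x ∉ ν) : Swapped ν ρ t u x :=
  ⟨x, ⟨hx, hx'⟩, Relation.ReflTransGen.refl⟩

theorem mem_nu_of_not_swapped {x : ℕ × ℕ} (hx : x ∈ ν ∪ ρ) (h : ¬ Swapped ν ρ t u x) :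
    x ∈ ν := by
  by_contra hxν
  rcases hx with hxν' | hxρ
  · exact hxν hxν'
  · exact h (swapped_B hxρ hxν)

theorem swapped_adj {x y : ℕ × ℕ} (h : RigidAdj ν ρ t u x y) (hs : Swapped ν ρ t u x) :
    Swapped ν ρ t u y := by
  obtain ⟨b, hb, hpath⟩ := hs
  exact ⟨b, hb, Relation.ReflTransGen.head (Or.symm h) hpath⟩

theorem tOut_le_hi (hν : IsOrderIdeal ν) (hρ : IsOrderIdeal ρ)
    (ht : goodOn ν t) (hu : goodOn ρ u) {x : ℕ × ℕ} (hx : x ∈ ν ∪ ρ) :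
    tOut ν ρ t u x ≤ hi ν ρ t u x := by
  rw [tOut]
  split_ifs with hs
  · have hxρ : x ∈ ρ := swapped_mem hν hρ ht hu hs
    rw [hi, if_pos hxρ]
    split_ifs with hxν
    · exact le_max_right _ _
    · exact le_rfl
  · have hxν : x ∈ ν := mem_nu_of_not_swapped hx hs
    by_cases hxρ : x ∈ ρ
    · rw [hi, if_pos hxρ, if_pos hxν]; exact le_max_left _ _
    · rw [hi, if_neg hxρ]

theorem lo_le_tOut (hν : IsOrderIdeal ν) (hρ : IsOrderIdeal ρ)
    (ht : goodOn ν t) (hu : goodOn ρ u) {x : ℕ × ℕ} (hx : x ∈ ν ∪ ρ) :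
    lo ν ρ t u x ≤ tOut ν ρ t u x := by
  rw [tOut]
  split_ifs with hs
  · have hxρ : x ∈ ρ := swapped_mem hν hρ ht hu hs
    rw [lo, if_pos hxρ]
    split_ifs with hxν
    · exact min_le_right _ _
    · exact le_rfl
  · have hxν : x ∈ ν := mem_nu_of_not_swapped hx hs
    by_cases hxρ : x ∈ ρ
    · rw [lo, if_pos hxρ, if_pos hxν]; exact min_le_left _ _
    · rw [lo, if_neg hxρ]

theorem lo_le_uOut {x : ℕ × ℕ} (hx : x ∈ ν ∩ ρ) :
    lo ν ρ t u x ≤ uOut ν ρ t u x := by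
  rw [uOut, lo, if_pos hx.2, if_pos hx.1]
  split_ifs with hs
  · exact min_le_left _ _
  · exact min_le_right _ _

theorem uOut_le_hi {x : ℕ × ℕ} (hx : x ∈ ν ∩ ρ) :
    uOut ν ρ t u x ≤ hi ν ρ t u x := by
  rw [uOut, hi, if_pos hx.2, if_pos hx.1]
  split_ifs with hs
  · exact le_max_left _ _
  · exact le_max_right _ _

theorem good_tOut (hν : IsOrderIdeal ν) (hρ : IsOrderIdeal ρ)
    (ht : goodOn ν t) (hu : goodOn ρ u) : goodOn (ν ∪ ρ) (tOut ν ρ t u) := by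
  constructor
  · intro i j hx hy
    by_cases hsx : Swapped ν ρ t u (i, j) <;> by_cases hsy : Swapped ν ρ t u (i, j + 1)
    · rw [tOut, if_pos hsx, tOut, if_pos hsy]
      exact hu.1 i j (swapped_mem hν hρ ht hu hsx) (swapped_mem hν hρ ht hu hsy)
    · have hnr : ¬ Rigid ν ρ t u (i, j) (i, j + 1) :=
        fun hr => hsy (swapped_adj (Or.inl hr) hsx)
      have hle : hi ν ρ t u (i, j) ≤ lo ν ρ t u (i, j + 1) :=
        not_lt.mp (fun hlt => hnr ⟨hx, hy, Or.inl ⟨rfl, hlt⟩⟩)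
      exact le_trans (tOut_le_hi hν hρ ht hu hx)
        (le_trans hle (lo_le_tOut hν hρ ht hu hy))
    · have hnr : ¬ Rigid ν ρ t u (i, j) (i, j + 1) :=
        fun hr => hsx (swapped_adj (Or.inr hr) hsy)
      have hle : hi ν ρ t u (i, j) ≤ lo ν ρ t u (i, j + 1) :=
        not_lt.mp (fun hlt => hnr ⟨hx, hy, Or.inl ⟨rfl, hlt⟩⟩)
      exact le_trans (tOut_le_hi hν hρ ht hu hx)
        (le_trans hle (lo_le_tOut hν hρ ht hu hy))
    · rw [tOut, if_neg hsx, tOut, if_neg hsy]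
      exact ht.1 i j (mem_nu_of_not_swapped hx hsx) (mem_nu_of_not_swapped hy hsy)
  · intro i j hx hy
    by_cases hsx : Swapped ν ρ t u (i, j) <;> by_cases hsy : Swapped ν ρ t u (i + 1, j)
    · rw [tOut, if_pos hsx, tOut, if_pos hsy]
      exact hu.2 i j (swapped_mem hν hρ ht hu hsx) (swapped_mem hν hρ ht hu hsy)
    · have hnr : ¬ Rigid ν ρ t u (i, j) (i + 1, j) :=
        fun hr => hsy (swapped_adj (Or.inl hr) hsx)
      have hle : hi ν ρ t u (i, j) < lo ν ρ t u (i + 1, j) :=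
        not_le.mp (fun hlt => hnr ⟨hx, hy, Or.inr ⟨rfl, hlt⟩⟩)
      exact lt_of_le_of_lt (tOut_le_hi hν hρ ht hu hx)
        (lt_of_lt_of_le hle (lo_le_tOut hν hρ ht hu hy))
    · have hnr : ¬ Rigid ν ρ t u (i, j) (i + 1, j) :=
        fun hr => hsx (swapped_adj (Or.inr hr) hsy)
      have hle : hi ν ρ t u (i, j) < lo ν ρ t u (i + 1, j) :=
        not_le.mp (fun hlt => hnr ⟨hx, hy, Or.inr ⟨rfl, hlt⟩⟩)
      exact lt_of_le_of_lt (tOut_le_hi hν hρ ht hu hx)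
        (lt_of_lt_of_le hle (lo_le_tOut hν hρ ht hu hy))
    · rw [tOut, if_neg hsx, tOut, if_neg hsy]
      exact ht.2 i j (mem_nu_of_not_swapped hx hsx) (mem_nu_of_not_swapped hy hsy)

theorem good_uOut (hν : IsOrderIdeal ν) (hρ : IsOrderIdeal ρ)
    (ht : goodOn ν t) (hu : goodOn ρ u) : goodOn (ν ∩ ρ) (uOut ν ρ t u) := by
  have hsub : ∀ z : ℕ × ℕ, z ∈ ν ∩ ρ → z ∈ ν ∪ ρ := fun z hz => Or.inl hz.1
  constructor
  · intro i j hx hy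
    by_cases hsx : Swapped ν ρ t u (i, j) <;> by_cases hsy : Swapped ν ρ t u (i, j + 1)
    · rw [uOut, if_pos hsx, uOut, if_pos hsy]
      exact ht.1 i j hx.1 hy.1
    · have hnr : ¬ Rigid ν ρ t u (i, j) (i, j + 1) :=
        fun hr => hsy (swapped_adj (Or.inl hr) hsx)
      have hle : hi ν ρ t u (i, j) ≤ lo ν ρ t u (i, j + 1) :=
        not_lt.mp (fun hlt => hnr ⟨hsub _ hx, hsub _ hy, Or.inl ⟨rfl, hlt⟩⟩)
      exact le_trans (uOut_le_hi hx) (le_trans hle (lo_le_uOut hy))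
    · have hnr : ¬ Rigid ν ρ t u (i, j) (i, j + 1) :=
        fun hr => hsx (swapped_adj (Or.inr hr) hsy)
      have hle : hi ν ρ t u (i, j) ≤ lo ν ρ t u (i, j + 1) :=
        not_lt.mp (fun hlt => hnr ⟨hsub _ hx, hsub _ hy, Or.inl ⟨rfl, hlt⟩⟩)
      exact le_trans (uOut_le_hi hx) (le_trans hle (lo_le_uOut hy))
    · rw [uOut, if_neg hsx, uOut, if_neg hsy]
      exact hu.1 i j hx.2 hy.2
  · intro i j hx hy
    by_cases hsx : Swapped ν ρ t u (i, j) <;> by_cases hsy : Swapped ν ρ t u (i + 1, j)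
    · rw [uOut, if_pos hsx, uOut, if_pos hsy]
      exact ht.2 i j hx.1 hy.1
    · have hnr : ¬ Rigid ν ρ t u (i, j) (i + 1, j) :=
        fun hr => hsy (swapped_adj (Or.inl hr) hsx)
      have hle : hi ν ρ t u (i, j) < lo ν ρ t u (i + 1, j) :=
        not_le.mp (fun hlt => hnr ⟨hsub _ hx, hsub _ hy, Or.inr ⟨rfl, hlt⟩⟩)
      exact lt_of_le_of_lt (uOut_le_hi hx) (lt_of_lt_of_le hle (lo_le_uOut hy))
    · have hnr : ¬ Rigid ν ρ t u (i, j) (i + 1, j) :=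
        fun hr => hsx (swapped_adj (Or.inr hr) hsy)
      have hle : hi ν ρ t u (i, j) < lo ν ρ t u (i + 1, j) :=
        not_le.mp (fun hlt => hnr ⟨hsub _ hx, hsub _ hy, Or.inr ⟨rfl, hlt⟩⟩)
      exact lt_of_le_of_lt (uOut_le_hi hx) (lt_of_lt_of_le hle (lo_le_uOut hy))
    · rw [uOut, if_neg hsx, uOut, if_neg hsy]
      exact hu.2 i j hx.2 hy.2


section Ext

variable {ν ρ : Set (ℕ × ℕ)}

noncomputable def tE (T : ν → ℕ) (U : ρ → ℕ) : ℕ × ℕ → ℕ := fun x =>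
  if h : x ∈ ν then T ⟨x, h⟩ else if h : x ∈ ρ then U ⟨x, h⟩ else 0

noncomputable def uE (T : ν → ℕ) (U : ρ → ℕ) : ℕ × ℕ → ℕ := fun x =>
  if h : x ∈ ρ then U ⟨x, h⟩ else if h : x ∈ ν then T ⟨x, h⟩ else 0

theorem tE_mem (T : ν → ℕ) (U : ρ → ℕ) {x : ℕ × ℕ} (h : x ∈ ν) : tE T U x = T ⟨x, h⟩ :=
  dif_pos h

theorem uE_mem (T : ν → ℕ) (U : ρ → ℕ) {x : ℕ × ℕ} (h : x ∈ ρ) : uE T U x = U ⟨x, h⟩ :=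
  dif_pos h

theorem good_tE (T : ν → ℕ) (U : ρ → ℕ) (hT : IsSSYT ν T) : goodOn ν (tE T U) := by
  constructor
  · intro i j h1 h2
    rw [tE_mem T U h1, tE_mem T U h2]
    exact hT.1 ⟨(i, j), h1⟩ ⟨(i, j + 1), h2⟩ rfl rfl
  · intro i j h1 h2
    rw [tE_mem T U h1, tE_mem T U h2]
    exact hT.2 ⟨(i, j), h1⟩ ⟨(i + 1, j), h2⟩ rfl rfl

theorem good_uE (T : ν → ℕ) (U : ρ → ℕ) (hU : IsSSYT ρ U) : goodOn ρ (uE T U) := by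
  constructor
  · intro i j h1 h2
    rw [uE_mem T U h1, uE_mem T U h2]
    exact hU.1 ⟨(i, j), h1⟩ ⟨(i, j + 1), h2⟩ rfl rfl
  · intro i j h1 h2
    rw [uE_mem T U h1, uE_mem T U h2]
    exact hU.2 ⟨(i, j), h1⟩ ⟨(i + 1, j), h2⟩ rfl rfl

theorem isSSYT_of_goodOn {D : Set (ℕ × ℕ)} {f : ℕ × ℕ → ℕ} (h : goodOn D f) :
    IsSSYT D (fun z : D => f ↑z) := by
  constructor
  · rintro ⟨⟨a, b⟩, hc⟩ ⟨⟨a', b'⟩, hc'⟩ h1 h2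
    dsimp only at h1 h2 ⊢
    subst h1
    subst h2
    exact h.1 a b hc hc'
  · rintro ⟨⟨a, b⟩, hc⟩ ⟨⟨a', b'⟩, hc'⟩ h1 h2
    dsimp only at h1 h2 ⊢
    subst h1
    subst h2
    exact h.2 a b hc hc'

theorem wtFun_eq_ncard {σ : Set (ℕ × ℕ)} {T : σ → ℕ} {f : ℕ × ℕ → ℕ}
    (hf : ∀ x (h : x ∈ σ), f x = T ⟨x, h⟩) (n : ℕ) :
    wtFun T n = (σ ∩ {x | f x = n}).ncard := by
  rw [wtFun, ← Nat.card_coe_set_eq]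
  apply Nat.card_congr
  refine ⟨fun w => ⟨↑w.1, ⟨w.1.2, ?_⟩⟩, fun w => ⟨⟨↑w, w.2.1⟩, ?_⟩, ?_, ?_⟩
  · show f ↑w.1 = n
    rw [hf ↑w.1 w.1.2]
    exact w.2
  · show T ⟨↑w, w.2.1⟩ = n
    rw [← hf ↑w w.2.1]
    exact w.2.2
  · intro w
    apply Subtype.ext
    apply Subtype.ext
    rfl
  · intro w
    apply Subtype.ext
    rfl

theorem weight_eq (hν : IsOrderIdeal ν) (hρ : IsOrderIdeal ρ) (hνf : ν.Finite) (hρf : ρ.Finite)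
    {t u : ℕ × ℕ → ℕ} (ht : goodOn ν t) (hu : goodOn ρ u) (n : ℕ) :
    (ν ∩ {x | t x = n}).ncard + (ρ ∩ {x | u x = n}).ncard =
      ((ν ∪ ρ) ∩ {x | tOut ν ρ t u x = n}).ncard +
        ((ν ∩ ρ) ∩ {x | uOut ν ρ t u x = n}).ncard := by
  classical
  set Sw : Set (ℕ × ℕ) := {x | Swapped ν ρ t u x} with hSwdef
  have e1 : ((ν ∪ ρ) ∩ {x | tOut ν ρ t u x = n}) ∩ Sw = (ρ ∩ {x | u x = n}) ∩ Sw := by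
    ext x
    simp only [Set.mem_inter_iff, Set.mem_union, Set.mem_setOf_eq, hSwdef]
    constructor
    · rintro ⟨⟨hxm, hval⟩, hs⟩
      refine ⟨⟨swapped_mem hν hρ ht hu hs, ?_⟩, hs⟩
      rwa [tOut, if_pos hs] at hval
    · rintro ⟨⟨hxρ, hval⟩, hs⟩
      exact ⟨⟨Or.inr hxρ, by rwa [tOut, if_pos hs]⟩, hs⟩
  have e2 : ((ν ∪ ρ) ∩ {x | tOut ν ρ t u x = n}) \ Sw = (ν ∩ {x | t x = n}) \ Sw := by
    ext x
    simp only [Set.mem_diff, Set.mem_inter_iff, Set.mem_union, Set.mem_setOf_eq, hSwdef]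
    constructor
    · rintro ⟨⟨hxm, hval⟩, hs⟩
      refine ⟨⟨mem_nu_of_not_swapped hxm hs, ?_⟩, hs⟩
      rwa [tOut, if_neg hs] at hval
    · rintro ⟨⟨hxν, hval⟩, hs⟩
      exact ⟨⟨Or.inl hxν, by rwa [tOut, if_neg hs]⟩, hs⟩
  have e3 : ((ν ∩ ρ) ∩ {x | uOut ν ρ t u x = n}) ∩ Sw = (ν ∩ {x | t x = n}) ∩ Sw := by
    ext x
    simp only [Set.mem_inter_iff, Set.mem_setOf_eq, hSwdef]
    constructor
    · rintro ⟨⟨⟨hxν, hxρ⟩, hval⟩, hs⟩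
      refine ⟨⟨hxν, ?_⟩, hs⟩
      rwa [uOut, if_pos hs] at hval
    · rintro ⟨⟨hxν, hval⟩, hs⟩
      exact ⟨⟨⟨hxν, swapped_mem hν hρ ht hu hs⟩, by rwa [uOut, if_pos hs]⟩, hs⟩
  have e4 : ((ν ∩ ρ) ∩ {x | uOut ν ρ t u x = n}) \ Sw = (ρ ∩ {x | u x = n}) \ Sw := by
    ext x
    simp only [Set.mem_diff, Set.mem_inter_iff, Set.mem_setOf_eq, hSwdef]
    constructor
    · rintro ⟨⟨⟨hxν, hxρ⟩, hval⟩, hs⟩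
      refine ⟨⟨hxρ, ?_⟩, hs⟩
      rwa [uOut, if_neg hs] at hval
    · rintro ⟨⟨hxρ, hval⟩, hs⟩
      refine ⟨⟨⟨mem_nu_of_not_swapped (Or.inr hxρ) hs, hxρ⟩, by rwa [uOut, if_neg hs]⟩, hs⟩
  have r1 := (Set.ncard_inter_add_ncard_diff_eq_ncard (ν ∩ {x | t x = n}) Sw
    (hνf.inter_of_left _)).symm
  have r2 := (Set.ncard_inter_add_ncard_diff_eq_ncard (ρ ∩ {x | u x = n}) Sw
    (hρf.inter_of_left _)).symm
  have r3 := (Set.ncard_inter_add_ncard_diff_eq_ncard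
    ((ν ∪ ρ) ∩ {x | tOut ν ρ t u x = n}) Sw ((hνf.union hρf).inter_of_left _)).symm
  have r4 := (Set.ncard_inter_add_ncard_diff_eq_ncard
    ((ν ∩ ρ) ∩ {x | uOut ν ρ t u x = n}) Sw ((hνf.inter_of_left ρ).inter_of_left _)).symm
  rw [r1, r2, r3, r4, e1, e2, e3, e4]
  omega

theorem inj_core (hν : IsOrderIdeal ν) (hρ : IsOrderIdeal ρ)
    {t₁ u₁ t₂ u₂ : ℕ × ℕ → ℕ}
    (ht₁ : goodOn ν t₁) (hu₁ : goodOn ρ u₁) (ht₂ : goodOn ν t₂) (hu₂ : goodOn ρ u₂)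
    (h1 : ∀ x ∈ ν ∪ ρ, tOut ν ρ t₁ u₁ x = tOut ν ρ t₂ u₂ x)
    (h2 : ∀ x ∈ ν ∩ ρ, uOut ν ρ t₁ u₁ x = uOut ν ρ t₂ u₂ x) :
    (∀ x ∈ ν, t₁ x = t₂ x) ∧ (∀ x ∈ ρ, u₁ x = u₂ x) := by
  classical
  have hdata : ∀ x ∈ ν ∪ ρ,
      lo ν ρ t₁ u₁ x = lo ν ρ t₂ u₂ x ∧ hi ν ρ t₁ u₁ x = hi ν ρ t₂ u₂ x := by
    intro x hx
    by_cases hxν : x ∈ ν <;> by_cases hxρ : x ∈ ρ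
    · have hD : x ∈ ν ∩ ρ := ⟨hxν, hxρ⟩
      have a1 : min (tOut ν ρ t₁ u₁ x) (uOut ν ρ t₁ u₁ x) = min (t₁ x) (u₁ x) := by
        rw [tOut, uOut]; split_ifs with hs
        · exact min_comm _ _
        · rfl
      have a2 : min (tOut ν ρ t₂ u₂ x) (uOut ν ρ t₂ u₂ x) = min (t₂ x) (u₂ x) := by
        rw [tOut, uOut]; split_ifs with hs
        · exact min_comm _ _
        · rfl
      have b1 : max (tOut ν ρ t₁ u₁ x) (uOut ν ρ t₁ u₁ x) = max (t₁ x) (u₁ x) := by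
        rw [tOut, uOut]; split_ifs with hs
        · exact max_comm _ _
        · rfl
      have b2 : max (tOut ν ρ t₂ u₂ x) (uOut ν ρ t₂ u₂ x) = max (t₂ x) (u₂ x) := by
        rw [tOut, uOut]; split_ifs with hs
        · exact max_comm _ _
        · rfl
      have m1 : min (t₁ x) (u₁ x) = min (t₂ x) (u₂ x) := by
        rw [← a1, ← a2, h1 x hx, h2 x hD]
      have m2 : max (t₁ x) (u₁ x) = max (t₂ x) (u₂ x) := by
        rw [← b1, ← b2, h1 x hx, h2 x hD]
      constructor
      · simp only [lo, if_pos hxρ, if_pos hxν]; exact m1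
      · simp only [hi, if_pos hxρ, if_pos hxν]; exact m2
    · have hs1 : ¬ Swapped ν ρ t₁ u₁ x := not_swapped_A hν hρ ht₁ hu₁ hxν hxρ
      have hs2 : ¬ Swapped ν ρ t₂ u₂ x := not_swapped_A hν hρ ht₂ hu₂ hxν hxρ
      have hteq : t₁ x = t₂ x := by
        have := h1 x hx
        rwa [tOut, if_neg hs1, tOut, if_neg hs2] at this
      constructor
      · simp only [lo, if_neg hxρ]; exact hteq
      · simp only [hi, if_neg hxρ]; exact hteq
    · have hs1 : Swapped ν ρ t₁ u₁ x := swapped_B hxρ hxν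
      have hs2 : Swapped ν ρ t₂ u₂ x := swapped_B hxρ hxν
      have hueq : u₁ x = u₂ x := by
        have := h1 x hx
        rwa [tOut, if_pos hs1, tOut, if_pos hs2] at this
      constructor
      · simp only [lo, if_pos hxρ, if_neg hxν]; exact hueq
      · simp only [hi, if_pos hxρ, if_neg hxν]; exact hueq
    · exact absurd hx (by simp [hxν, hxρ])
  have hr : ∀ x y, Rigid ν ρ t₁ u₁ x y ↔ Rigid ν ρ t₂ u₂ x y := by
    intro x y
    constructor
    · rintro ⟨hx, hy, hc⟩
      refine ⟨hx, hy, ?_⟩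
      rcases hc with ⟨e, hv⟩ | ⟨e, hv⟩
      · exact Or.inl ⟨e, by rwa [← (hdata y hy).1, ← (hdata x hx).2]⟩
      · exact Or.inr ⟨e, by rwa [← (hdata y hy).1, ← (hdata x hx).2]⟩
    · rintro ⟨hx, hy, hc⟩
      refine ⟨hx, hy, ?_⟩
      rcases hc with ⟨e, hv⟩ | ⟨e, hv⟩
      · exact Or.inl ⟨e, by rwa [(hdata y hy).1, (hdata x hx).2]⟩
      · exact Or.inr ⟨e, by rwa [(hdata y hy).1, (hdata x hx).2]⟩
  have hra : ∀ x y, RigidAdj ν ρ t₁ u₁ x y ↔ RigidAdj ν ρ t₂ u₂ x y := by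
    intro x y
    rw [RigidAdj, RigidAdj, hr x y, hr y x]
  have hsw : ∀ x, Swapped ν ρ t₁ u₁ x ↔ Swapped ν ρ t₂ u₂ x := by
    intro x
    constructor
    · rintro ⟨b, hb, hp⟩
      exact ⟨b, hb, Relation.ReflTransGen.mono (fun a b hab => (hra a b).mp hab) _ _ hp⟩
    · rintro ⟨b, hb, hp⟩
      exact ⟨b, hb, Relation.ReflTransGen.mono (fun a b hab => (hra a b).mpr hab) _ _ hp⟩
  constructor
  · intro x hxν
    by_cases hxρ : x ∈ ρ
    · by_cases hs : Swapped ν ρ t₁ u₁ x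
      · have hs2 := (hsw x).mp hs
        have := h2 x ⟨hxν, hxρ⟩
        rwa [uOut, if_pos hs, uOut, if_pos hs2] at this
      · have hs2 : ¬ Swapped ν ρ t₂ u₂ x := fun h => hs ((hsw x).mpr h)
        have := h1 x (Or.inl hxν)
        rwa [tOut, if_neg hs, tOut, if_neg hs2] at this
    · have hs1 : ¬ Swapped ν ρ t₁ u₁ x := not_swapped_A hν hρ ht₁ hu₁ hxν hxρ
      have hs2 : ¬ Swapped ν ρ t₂ u₂ x := not_swapped_A hν hρ ht₂ hu₂ hxν hxρ
      have := h1 x (Or.inl hxν)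
      rwa [tOut, if_neg hs1, tOut, if_neg hs2] at this
  · intro x hxρ
    by_cases hxν : x ∈ ν
    · by_cases hs : Swapped ν ρ t₁ u₁ x
      · have hs2 := (hsw x).mp hs
        have := h1 x (Or.inr hxρ)
        rwa [tOut, if_pos hs, tOut, if_pos hs2] at this
      · have hs2 : ¬ Swapped ν ρ t₂ u₂ x := fun h => hs ((hsw x).mpr h)
        have := h2 x ⟨hxν, hxρ⟩
        rwa [uOut, if_neg hs, uOut, if_neg hs2] at this
    · have hs1 : Swapped ν ρ t₁ u₁ x := swapped_B hxρ hxν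
      have hs2 : Swapped ν ρ t₂ u₂ x := swapped_B hxρ hxν
      have := h1 x (Or.inr hxρ)
      rwa [tOut, if_pos hs1, tOut, if_pos hs2] at this

end Ext

end CT

/-- for Young diagrams `ν`, `ρ` there is a weight-preserving
injection from pairs of SSYT of shapes `(ν, ρ)` to pairs of SSYT of shapes
`(ν ∪ ρ, ν ∩ ρ)`; consequently `s_{ν∪ρ} s_{ν∩ρ} − s_ν s_ρ` is monomial-positive. -/
theorem cellTransfer_youngDiagrams (ν ρ : Set (ℕ × ℕ))
    (hν : IsOrderIdeal ν) (hρ : IsOrderIdeal ρ)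
    (hνf : ν.Finite) (hρf : ρ.Finite) :
    (∃ F : {T : ν → ℕ // IsSSYT ν T} × {U : ρ → ℕ // IsSSYT ρ U} →
        {T' : (ν ∪ ρ : Set (ℕ × ℕ)) → ℕ // IsSSYT (ν ∪ ρ) T'} ×
          {U' : (ν ∩ ρ : Set (ℕ × ℕ)) → ℕ // IsSSYT (ν ∩ ρ) U'},
      Function.Injective F ∧
        ∀ p, ∀ n : ℕ, wtFun (p.1 : ν → ℕ) n + wtFun (p.2 : ρ → ℕ) n =
          wtFun ((F p).1 : (ν ∪ ρ : Set (ℕ × ℕ)) → ℕ) n +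
            wtFun ((F p).2 : (ν ∩ ρ : Set (ℕ × ℕ)) → ℕ) n) ∧
      ∀ d : ℕ → ℕ, (Function.support d).Finite →
        Nat.card {p : (ν → ℕ) × (ρ → ℕ) //
            IsSSYT ν p.1 ∧ IsSSYT ρ p.2 ∧ ∀ n, wtFun p.1 n + wtFun p.2 n = d n} ≤
          Nat.card {p : ((ν ∪ ρ : Set (ℕ × ℕ)) → ℕ) × ((ν ∩ ρ : Set (ℕ × ℕ)) → ℕ) //
            IsSSYT (ν ∪ ρ) p.1 ∧ IsSSYT (ν ∩ ρ) p.2 ∧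
              ∀ n, wtFun p.1 n + wtFun p.2 n = d n} := by
  classical
  have hmain : ∃ F : {T : ν → ℕ // IsSSYT ν T} × {U : ρ → ℕ // IsSSYT ρ U} →
        {T' : (ν ∪ ρ : Set (ℕ × ℕ)) → ℕ // IsSSYT (ν ∪ ρ) T'} ×
          {U' : (ν ∩ ρ : Set (ℕ × ℕ)) → ℕ // IsSSYT (ν ∩ ρ) U'},
      Function.Injective F ∧
        ∀ p, ∀ n : ℕ, wtFun (p.1 : ν → ℕ) n + wtFun (p.2 : ρ → ℕ) n =
          wtFun ((F p).1 : (ν ∪ ρ : Set (ℕ × ℕ)) → ℕ) n +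
            wtFun ((F p).2 : (ν ∩ ρ : Set (ℕ × ℕ)) → ℕ) n := by
    refine ⟨fun p =>
      (⟨fun z => CT.tOut ν ρ (CT.tE p.1.1 p.2.1) (CT.uE p.1.1 p.2.1) ↑z,
          CT.isSSYT_of_goodOn
            (CT.good_tOut hν hρ (CT.good_tE _ _ p.1.2) (CT.good_uE _ _ p.2.2))⟩,
       ⟨fun z => CT.uOut ν ρ (CT.tE p.1.1 p.2.1) (CT.uE p.1.1 p.2.1) ↑z,
          CT.isSSYT_of_goodOn
            (CT.good_uOut hν hρ (CT.good_tE _ _ p.1.2) (CT.good_uE _ _ p.2.2))⟩),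
      ?_, ?_⟩
    · rintro ⟨⟨T₁, hT₁⟩, ⟨U₁, hU₁⟩⟩ ⟨⟨T₂, hT₂⟩, ⟨U₂, hU₂⟩⟩ h
      simp only [Prod.mk.injEq, Subtype.mk.injEq] at h
      obtain ⟨e1, e2⟩ := h
      have h1 : ∀ x ∈ ν ∪ ρ, CT.tOut ν ρ (CT.tE T₁ U₁) (CT.uE T₁ U₁) x
          = CT.tOut ν ρ (CT.tE T₂ U₂) (CT.uE T₂ U₂) x := fun x hx => congrFun e1 ⟨x, hx⟩
      have h2 : ∀ x ∈ ν ∩ ρ, CT.uOut ν ρ (CT.tE T₁ U₁) (CT.uE T₁ U₁) x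
          = CT.uOut ν ρ (CT.tE T₂ U₂) (CT.uE T₂ U₂) x := fun x hx => congrFun e2 ⟨x, hx⟩
      obtain ⟨ct, cu⟩ := CT.inj_core hν hρ (CT.good_tE T₁ U₁ hT₁) (CT.good_uE T₁ U₁ hU₁)
        (CT.good_tE T₂ U₂ hT₂) (CT.good_uE T₂ U₂ hU₂) h1 h2
      simp only [Prod.mk.injEq, Subtype.mk.injEq]
      constructor
      · funext z
        have := ct ↑z z.2
        rwa [CT.tE_mem T₁ U₁ z.2, CT.tE_mem T₂ U₂ z.2] at this
      · funext z
        have := cu ↑z z.2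
        rwa [CT.uE_mem T₁ U₁ z.2, CT.uE_mem T₂ U₂ z.2] at this
    · rintro ⟨⟨T, hT⟩, ⟨U, hU⟩⟩ n
      dsimp only
      have w1 : wtFun T n = (ν ∩ {x | CT.tE T U x = n}).ncard :=
        CT.wtFun_eq_ncard (fun x h => CT.tE_mem T U h) n
      have w2 : wtFun U n = (ρ ∩ {x | CT.uE T U x = n}).ncard :=
        CT.wtFun_eq_ncard (fun x h => CT.uE_mem T U h) n
      have w3 : wtFun (fun z : ↥(ν ∪ ρ) => CT.tOut ν ρ (CT.tE T U) (CT.uE T U) ↑z) n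
          = ((ν ∪ ρ) ∩ {x | CT.tOut ν ρ (CT.tE T U) (CT.uE T U) x = n}).ncard :=
        CT.wtFun_eq_ncard (fun x h => rfl) n
      have w4 : wtFun (fun z : ↥(ν ∩ ρ) => CT.uOut ν ρ (CT.tE T U) (CT.uE T U) ↑z) n
          = ((ν ∩ ρ) ∩ {x | CT.uOut ν ρ (CT.tE T U) (CT.uE T U) x = n}).ncard :=
        CT.wtFun_eq_ncard (fun x h => rfl) n
      rw [w1, w2, w3, w4]
      exact CT.weight_eq hν hρ hνf hρf (CT.good_tE T U hT) (CT.good_uE T U hU) n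
  obtain ⟨F, hFinj, hFwt⟩ := hmain
  refine ⟨⟨F, hFinj, hFwt⟩, ?_⟩
  intro d hd
  haveI hFU : Finite ↥(ν ∪ ρ) := (hνf.union hρf).to_subtype
  haveI hFI : Finite ↥(ν ∩ ρ) := (hνf.inter_of_left ρ).to_subtype
  haveI hFd : Finite ↥(Function.support d) := hd.to_subtype
  have hmem1 : ∀ (p : {p : ((ν ∪ ρ : Set (ℕ × ℕ)) → ℕ) × ((ν ∩ ρ : Set (ℕ × ℕ)) → ℕ) //
      IsSSYT (ν ∪ ρ) p.1 ∧ IsSSYT (ν ∩ ρ) p.2 ∧ ∀ n, wtFun p.1 n + wtFun p.2 n = d n})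
      (z : ↥(ν ∪ ρ)), p.1.1 z ∈ Function.support d := by
    intro p z
    have hw := p.2.2.2 (p.1.1 z)
    have hpos : 0 < wtFun p.1.1 (p.1.1 z) := by
      rw [wtFun]
      haveI : Nonempty {x : ↥(ν ∪ ρ) // p.1.1 x = p.1.1 z} := ⟨⟨z, rfl⟩⟩
      exact Nat.card_pos
    simp only [Function.mem_support]
    omega
  have hmem2 : ∀ (p : {p : ((ν ∪ ρ : Set (ℕ × ℕ)) → ℕ) × ((ν ∩ ρ : Set (ℕ × ℕ)) → ℕ) //
      IsSSYT (ν ∪ ρ) p.1 ∧ IsSSYT (ν ∩ ρ) p.2 ∧ ∀ n, wtFun p.1 n + wtFun p.2 n = d n})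
      (z : ↥(ν ∩ ρ)), p.1.2 z ∈ Function.support d := by
    intro p z
    have hw := p.2.2.2 (p.1.2 z)
    have hpos : 0 < wtFun p.1.2 (p.1.2 z) := by
      rw [wtFun]
      haveI : Nonempty {x : ↥(ν ∩ ρ) // p.1.2 x = p.1.2 z} := ⟨⟨z, rfl⟩⟩
      exact Nat.card_pos
    simp only [Function.mem_support]
    omega
  haveI hβfin : Finite {p : ((ν ∪ ρ : Set (ℕ × ℕ)) → ℕ) × ((ν ∩ ρ : Set (ℕ × ℕ)) → ℕ) //
      IsSSYT (ν ∪ ρ) p.1 ∧ IsSSYT (ν ∩ ρ) p.2 ∧ ∀ n, wtFun p.1 n + wtFun p.2 n = d n} := by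
    apply Finite.of_injective (fun p =>
      ((fun z => (⟨p.1.1 z, hmem1 p z⟩ : ↥(Function.support d))),
       (fun z => (⟨p.1.2 z, hmem2 p z⟩ : ↥(Function.support d)))))
    intro a b hab
    simp only [Prod.mk.injEq] at hab
    apply Subtype.ext
    refine Prod.ext_iff.mpr ⟨?_, ?_⟩
    · funext z
      exact congrArg Subtype.val (congrFun hab.1 z)
    · funext z
      exact congrArg Subtype.val (congrFun hab.2 z)
  apply Nat.card_le_card_of_injective
    (fun q => (⟨((F (⟨q.1.1, q.2.1⟩, ⟨q.1.2, q.2.2.1⟩)).1.1,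
               (F (⟨q.1.1, q.2.1⟩, ⟨q.1.2, q.2.2.1⟩)).2.1),
      (F (⟨q.1.1, q.2.1⟩, ⟨q.1.2, q.2.2.1⟩)).1.2,
      (F (⟨q.1.1, q.2.1⟩, ⟨q.1.2, q.2.2.1⟩)).2.2,
      fun n => (hFwt (⟨q.1.1, q.2.1⟩, ⟨q.1.2, q.2.2.1⟩) n).symm.trans (q.2.2.2 n)⟩))
  intro a b hab
  have hab' := congrArg Subtype.val hab
  have hFeq : F (⟨a.1.1, a.2.1⟩, ⟨a.1.2, a.2.2.1⟩) = F (⟨b.1.1, b.2.1⟩, ⟨b.1.2, b.2.2.1⟩) := by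
    have h1 := congrArg Prod.fst hab'
    have h2 := congrArg Prod.snd hab'
    exact Prod.ext_iff.mpr ⟨Subtype.ext h1, Subtype.ext h2⟩
  have hq := hFinj hFeq
  apply Subtype.ext
  have c1 := congrArg (fun w => (w.1.val : ν → ℕ)) hq
  have c2 := congrArg (fun w => (w.2.val : ρ → ℕ)) hq
  exact Prod.ext_iff.mpr ⟨c1, c2⟩
end

section
/- Let λ, μ, ν, ρ be partitions with at most k parts satisfying μ ⊆ λ and ρ ⊆ ν. Then there exists an injective map from pairs (U,T), where U is a semistandard tableau of shape λ/μ and T is a semistandard tableau of shape ν/ρ, to pairs (U',T') where U' is a semistandard tableau of shape max(λ/μ, ν/ρ) and T' is a semistandard tableau of shape min(λ/μ, ν/ρ), which is weight-preserving: for every n ∈ ℙ, the number of cells of U with entry n plus the number of cells of T with entry n equals the number of cells of U' with entry n plus the number of cells of T' with entry n. Consequently s_{max(λ/μ,ν/ρ)} s_{min(λ/μ,ν/ρ)} − s_{λ/μ} s_{ν/ρ} is monomial-positive. -/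
/-- `λ` is a partition with at most `k` parts (weakly decreasing on indices `1,…,k`). -/
def IsPartitionK (k : ℕ) (lam : ℕ → ℕ) : Prop :=
  ∀ ⦃i j : ℕ⦄, 1 ≤ i → i ≤ j → j ≤ k → lam j ≤ lam i

/-- The cells `{(i,j) | 1 ≤ i ≤ k, μᵢ < j ≤ λᵢ}` of the skew shape `λ/μ`. -/
def skewCells (k : ℕ) (lam mu : ℕ → ℕ) : Set (ℕ × ℕ) :=
  {c | 1 ≤ c.1 ∧ c.1 ≤ k ∧ mu c.1 < c.2 ∧ c.2 ≤ lam c.1}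

namespace CT

noncomputable section
attribute [local instance] Classical.propDecidable

abbrev V := WithTop ℕ

def InStrip (k : ℕ) (c : ℕ × ℕ) : Prop := 1 ≤ c.1 ∧ c.1 ≤ k ∧ 1 ≤ c.2

def ColOK (x y : V) : Prop := x < y ∨ (x = 0 ∧ y = 0) ∨ (x = ⊤ ∧ y = ⊤)

structure ExtOK (k : ℕ) (a b : ℕ → ℕ) (f : ℕ × ℕ → V) : Prop where
  top_off : ∀ c, ¬ InStrip k c → f c = ⊤
  zero_iff : ∀ c, InStrip k c → (f c = 0 ↔ c.2 ≤ b c.1)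
  top_iff : ∀ c, InStrip k c → (f c = ⊤ ↔ a c.1 < c.2)
  row : ∀ i j, 1 ≤ i → i ≤ k → 1 ≤ j → f (i, j) ≤ f (i, j + 1)
  col : ∀ i j, 1 ≤ i → i + 1 ≤ k → 1 ≤ j → ColOK (f (i, j)) (f (i + 1, j))

def hatF (k : ℕ) (a b : ℕ → ℕ) (U : skewCells k a b → ℕ+) : ℕ × ℕ → V :=
  fun c => if h : c ∈ skewCells k a b then ((U ⟨c, h⟩ : ℕ) : V)
    else if InStrip k c ∧ c.2 ≤ b c.1 then 0 else ⊤

lemma coe_pnat_ne_zero (m : ℕ+) : ((m : ℕ) : V) ≠ 0 := by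
  simp [PNat.ne_zero]

lemma coe_pnat_ne_top (m : ℕ+) : ((m : ℕ) : V) ≠ ⊤ := WithTop.coe_ne_top

lemma mem_strip {k : ℕ} {a b : ℕ → ℕ} {c : ℕ × ℕ} (h : c ∈ skewCells k a b) :
    InStrip k c := ⟨h.1, h.2.1, by have := h.2.2.1; omega⟩

lemma hatF_mem {k : ℕ} {a b : ℕ → ℕ} {U : skewCells k a b → ℕ+} {c : ℕ × ℕ}
    (h : c ∈ skewCells k a b) : hatF k a b U c = ((U ⟨c, h⟩ : ℕ) : V) := dif_pos h

lemma hatF_zero {k : ℕ} {a b : ℕ → ℕ} {U : skewCells k a b → ℕ+} {c : ℕ × ℕ}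
    (hs : InStrip k c) (h2 : c.2 ≤ b c.1) : hatF k a b U c = 0 := by
  have hnm : c ∉ skewCells k a b := by
    intro hm; exact absurd hm.2.2.1 (by omega)
  simp [hatF, hnm, hs, h2]

lemma hatF_top_off {k : ℕ} {a b : ℕ → ℕ} {U : skewCells k a b → ℕ+} {c : ℕ × ℕ}
    (hs : ¬ InStrip k c) : hatF k a b U c = ⊤ := by
  have hnm : c ∉ skewCells k a b := fun hm => hs (mem_strip hm)
  simp [hatF, hnm, hs]

lemma hatF_top {k : ℕ} {a b : ℕ → ℕ} {U : skewCells k a b → ℕ+} {c : ℕ × ℕ}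
    (hba : ∀ i, 1 ≤ i → i ≤ k → b i ≤ a i) (hs : InStrip k c) (h2 : a c.1 < c.2) :
    hatF k a b U c = ⊤ := by
  have hb : b c.1 ≤ a c.1 := hba c.1 hs.1 hs.2.1
  have hnm : c ∉ skewCells k a b := by
    intro hm; exact absurd hm.2.2.2 (by omega)
  have : ¬ (InStrip k c ∧ c.2 ≤ b c.1) := by
    rintro ⟨-, h⟩; omega
  simp [hatF, hnm, this]

lemma hatF_eq_coe_iff {k : ℕ} {a b : ℕ → ℕ} {U : skewCells k a b → ℕ+} {c : ℕ × ℕ}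
    {m : ℕ+} : hatF k a b U c = ((m : ℕ) : V) ↔ ∃ h : c ∈ skewCells k a b, U ⟨c, h⟩ = m := by
  constructor
  · intro h
    by_cases hm : c ∈ skewCells k a b
    · refine ⟨hm, ?_⟩
      rw [hatF_mem hm] at h
      exact_mod_cast h
    · exfalso
      rw [hatF] at h
      rw [dif_neg hm] at h
      split_ifs at h with h1
      · exact coe_pnat_ne_zero m h.symm
      · exact coe_pnat_ne_top m h.symm
  · rintro ⟨hm, hv⟩
    rw [hatF_mem hm, hv]

lemma hatF_extOK {k : ℕ} {a b : ℕ → ℕ} (ha : IsPartitionK k a) (hb : IsPartitionK k b)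
    (hba : ∀ i, 1 ≤ i → i ≤ k → b i ≤ a i) {U : skewCells k a b → ℕ+}
    (hU : IsSSYT (skewCells k a b) U) : ExtOK k a b (hatF k a b U) := by
  constructor
  · exact fun c hs => hatF_top_off hs
  · intro c hs
    constructor
    · intro h0
      by_contra hc
      push_neg at hc
      by_cases hm : c ∈ skewCells k a b
      · exact coe_pnat_ne_zero _ ((hatF_mem hm) ▸ h0)
      · have h2 : a c.1 < c.2 := by
          have := hs.1; have := hs.2.1
          simp only [skewCells, Set.mem_setOf_eq] at hm
          omega
        exact absurd ((hatF_top hba hs h2) ▸ h0) (by simp)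
    · exact fun h2 => hatF_zero hs h2
  · intro c hs
    constructor
    · intro h0
      by_contra hc
      push_neg at hc
      by_cases hm : c ∈ skewCells k a b
      · exact coe_pnat_ne_top _ ((hatF_mem hm) ▸ h0)
      · by_cases h2 : c.2 ≤ b c.1
        · exact absurd ((hatF_zero hs h2) ▸ h0) (by simp)
        · exfalso
          have := hs.1; have := hs.2.1
          simp only [skewCells, Set.mem_setOf_eq] at hm
          omega
    · exact fun h2 => hatF_top hba hs h2
  · intro i j h1 h2 hj
    have hs : InStrip k (i, j) := ⟨h1, h2, hj⟩
    have hs' : InStrip k (i, j + 1) := ⟨h1, h2, by omega⟩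
    by_cases hz : j ≤ b i
    · rw [hatF_zero hs hz]; exact zero_le
    by_cases hm : (i, j) ∈ skewCells k a b
    · by_cases hm' : (i, j + 1) ∈ skewCells k a b
      · rw [hatF_mem hm, hatF_mem hm']
        have := hU.1 ⟨(i, j), hm⟩ ⟨(i, j + 1), hm'⟩ rfl rfl
        exact_mod_cast this
      · have h2' : a i < j + 1 := by
          simp [skewCells] at hm hm' ⊢
          omega
        rw [hatF_top hba hs' h2']; exact le_top
    · have h2 : a i < j := by
        simp only [skewCells, Set.mem_setOf_eq] at hm
        omega
      rw [hatF_top hba hs h2, hatF_top hba hs' (show a i < j + 1 by omega)]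
  · intro i j h1 h2 hj
    have hs : InStrip k (i, j) := ⟨h1, by omega, hj⟩
    have hs' : InStrip k (i + 1, j) := ⟨by omega, h2, hj⟩
    have hbmono : b (i + 1) ≤ b i := hb h1 (by omega) h2
    have hamono : a (i + 1) ≤ a i := ha h1 (by omega) h2
    by_cases hz : j ≤ b i
    · by_cases hz' : hatF k a b U (i + 1, j) = 0
      · exact Or.inr (Or.inl ⟨hatF_zero hs hz, hz'⟩)
      · exact Or.inl ((hatF_zero hs hz) ▸ pos_iff_ne_zero.mpr hz')
    by_cases hm : (i, j) ∈ skewCells k a b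
    · by_cases hm' : (i + 1, j) ∈ skewCells k a b
      · left
        rw [hatF_mem hm, hatF_mem hm']
        have := hU.2 ⟨(i, j), hm⟩ ⟨(i + 1, j), hm'⟩ rfl rfl
        exact_mod_cast this
      · have h2' : a (i + 1) < j := by
          simp [skewCells] at hm hm' ⊢
          omega
        rw [hatF_top hba hs' h2', hatF_mem hm]
        exact Or.inl (WithTop.coe_lt_top _)
    · have h2 : a i < j := by
        simp only [skewCells, Set.mem_setOf_eq] at hm
        omega
      exact Or.inr (Or.inr ⟨hatF_top hba hs h2, hatF_top hba hs' (show a (i+1) < j by omega)⟩)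

end
end CT

namespace CT
noncomputable section
attribute [local instance] Classical.propDecidable

def Bad (k : ℕ) (p q : ℕ × ℕ → V) (c d : ℕ × ℕ) : Prop :=
  InStrip k c ∧ InStrip k d ∧
    ((d.1 = c.1 ∧ d.2 = c.2 + 1 ∧ ¬(q c ≤ p d ∧ p c ≤ q d)) ∨
     (d.1 = c.1 + 1 ∧ d.2 = c.2 ∧ ¬(ColOK (q c) (p d) ∧ ColOK (p c) (q d))))

inductive Sw (k : ℕ) (p q : ℕ × ℕ → V) (B : Set (ℕ × ℕ)) : ℕ × ℕ → Prop
  | base {c} : c ∈ B → Sw k p q B c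
  | fwd {c d} : Sw k p q B c → Bad k p q c d → Sw k p q B d
  | bwd {c d} : Sw k p q B d → Bad k p q c d → Sw k p q B c

def baseS (k : ℕ) (lam mu nu rho : ℕ → ℕ) : Set (ℕ × ℕ) :=
  {c | InStrip k c ∧ ((mu c.1 < c.2 ∧ c.2 ≤ rho c.1) ∨ (lam c.1 < c.2 ∧ c.2 ≤ nu c.1))}

def swapF (p q : ℕ × ℕ → V) (S : ℕ × ℕ → Prop) : ℕ × ℕ → V :=
  fun c => if S c then q c else p c

lemma not_lt_zeroV {x : V} : ¬ x < 0 := by simp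

lemma ExtOK.row' {k : ℕ} {a b : ℕ → ℕ} {f : ℕ × ℕ → V} (hf : ExtOK k a b f)
    {c d : ℕ × ℕ} (hs : InStrip k c) (h1 : d.1 = c.1) (h2 : d.2 = c.2 + 1) :
    f c ≤ f d := by
  have hd : d = (c.1, c.2 + 1) := Prod.ext_iff.mpr ⟨h1, h2⟩
  have := hf.row c.1 c.2 hs.1 hs.2.1 hs.2.2
  rwa [Prod.mk.eta, ← hd] at this

lemma ExtOK.col' {k : ℕ} {a b : ℕ → ℕ} {f : ℕ × ℕ → V} (hf : ExtOK k a b f)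
    {c d : ℕ × ℕ} (hs : InStrip k c) (hk : d.1 ≤ k) (h1 : d.1 = c.1 + 1) (h2 : d.2 = c.2) :
    ColOK (f c) (f d) := by
  have hd : d = (c.1 + 1, c.2) := Prod.ext_iff.mpr ⟨h1, h2⟩
  have := hf.col c.1 c.2 hs.1 (by omega) hs.2.2
  rwa [Prod.mk.eta, ← hd] at this

section Master

variable {k : ℕ} {lam mu nu rho : ℕ → ℕ} {f g : ℕ × ℕ → V}

lemma sw_gf (hf : ExtOK k lam mu f) (hg : ExtOK k nu rho g) :
    ∀ {c}, Sw k f g (baseS k lam mu nu rho) c → g c < f c := by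
  intro c h
  induction h with
  | @base c h =>
      obtain ⟨hs, hcase⟩ := h
      rcases hcase with ⟨h1, h2⟩ | ⟨h1, h2⟩
      · have hg0 : g c = 0 := (hg.zero_iff c hs).mpr h2
        have hf0 : f c ≠ 0 := fun h0 => by have := (hf.zero_iff c hs).mp h0; omega
        rw [hg0]; exact pos_iff_ne_zero.mpr hf0
      · have hft : f c = ⊤ := (hf.top_iff c hs).mpr h1
        have hgt : g c ≠ ⊤ := fun h0 => by have := (hg.top_iff c hs).mp h0; omega
        rw [hft]; exact lt_top_iff_ne_top.mpr hgt
  | @fwd c d hc hbad ih =>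
      by_contra hnd
      push_neg at hnd
      obtain ⟨hsc, hsd, hcl⟩ := hbad
      rcases hcl with ⟨hd1, hd2, hn⟩ | ⟨hd1, hd2, hn⟩
      · exact hn ⟨ih.le.trans (hf.row' hsc hd1 hd2), (hf.row' hsc hd1 hd2).trans hnd⟩
      · refine hn ⟨?_, ?_⟩
        · rcases hf.col' hsc hsd.2.1 hd1 hd2 with h | ⟨h0, h0'⟩ | ⟨ht, ht'⟩
          · exact Or.inl (ih.trans h)
          · exact absurd (h0 ▸ ih) not_lt_zeroV
          · exact Or.inl (ht' ▸ (ih.trans_le le_top))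
        · rcases hf.col' hsc hsd.2.1 hd1 hd2 with h | ⟨h0, h0'⟩ | ⟨ht, ht'⟩
          · exact Or.inl (h.trans_le hnd)
          · exact absurd (h0 ▸ ih) not_lt_zeroV
          · exact Or.inr (Or.inr ⟨ht, top_le_iff.mp (ht' ▸ hnd)⟩)
  | @bwd c d hd hbad ih =>
      by_contra hnc
      push_neg at hnc
      obtain ⟨hsc, hsd, hcl⟩ := hbad
      rcases hcl with ⟨hd1, hd2, hn⟩ | ⟨hd1, hd2, hn⟩
      · exact hn ⟨(hg.row' hsc hd1 hd2).trans ih.le, hnc.trans (hg.row' hsc hd1 hd2)⟩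
      · refine hn ⟨?_, ?_⟩
        · rcases hg.col' hsc hsd.2.1 hd1 hd2 with h | ⟨h0, h0'⟩ | ⟨ht, ht'⟩
          · exact Or.inl (h.trans ih)
          · exact Or.inl (h0 ▸ (h0' ▸ ih))
          · exact absurd (ht' ▸ ih) not_top_lt
        · rcases hg.col' hsc hsd.2.1 hd1 hd2 with h | ⟨h0, h0'⟩ | ⟨ht, ht'⟩
          · exact Or.inl (hnc.trans_lt h)
          · exact Or.inr (Or.inl ⟨le_antisymm (h0 ▸ hnc) zero_le, h0'⟩)
          · exact absurd (ht' ▸ ih) not_top_lt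

end Master
end
end CT

namespace CT
noncomputable section
attribute [local instance] Classical.propDecidable

def XF (k : ℕ) (lam mu nu rho : ℕ → ℕ) (f g : ℕ × ℕ → V) : ℕ × ℕ → V :=
  swapF f g (Sw k f g (baseS k lam mu nu rho))

def YF (k : ℕ) (lam mu nu rho : ℕ → ℕ) (f g : ℕ × ℕ → V) : ℕ × ℕ → V :=
  swapF g f (Sw k f g (baseS k lam mu nu rho))

section Master

variable {k : ℕ} {lam mu nu rho : ℕ → ℕ} {f g : ℕ × ℕ → V}

lemma XF_pos {c} (hc : Sw k f g (baseS k lam mu nu rho) c) :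
    XF k lam mu nu rho f g c = g c := if_pos hc

lemma XF_neg {c} (hc : ¬ Sw k f g (baseS k lam mu nu rho) c) :
    XF k lam mu nu rho f g c = f c := if_neg hc

lemma YF_pos {c} (hc : Sw k f g (baseS k lam mu nu rho) c) :
    YF k lam mu nu rho f g c = f c := if_pos hc

lemma YF_neg {c} (hc : ¬ Sw k f g (baseS k lam mu nu rho) c) :
    YF k lam mu nu rho f g c = g c := if_neg hc

lemma iff_of_bad {c d} (hb : Bad k f g c d) :
    (Sw k f g (baseS k lam mu nu rho) c ↔ Sw k f g (baseS k lam mu nu rho) d) :=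
  ⟨fun h => Sw.fwd h hb, fun h => Sw.bwd h hb⟩

lemma crossH_of_not_bad {p q : ℕ × ℕ → V} {c d} (hnb : ¬ Bad k p q c d)
    (hsc : InStrip k c) (hsd : InStrip k d) (h1 : d.1 = c.1) (h2 : d.2 = c.2 + 1) :
    q c ≤ p d ∧ p c ≤ q d := by
  by_contra h
  exact hnb ⟨hsc, hsd, Or.inl ⟨h1, h2, h⟩⟩

lemma crossV_of_not_bad {p q : ℕ × ℕ → V} {c d} (hnb : ¬ Bad k p q c d)
    (hsc : InStrip k c) (hsd : InStrip k d) (h1 : d.1 = c.1 + 1) (h2 : d.2 = c.2) :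
    ColOK (q c) (p d) ∧ ColOK (p c) (q d) := by
  by_contra h
  exact hnb ⟨hsc, hsd, Or.inr ⟨h1, h2, h⟩⟩

lemma extOK_XF (hf : ExtOK k lam mu f) (hg : ExtOK k nu rho g) :
    ExtOK k (fun i => max (lam i) (nu i)) (fun i => max (mu i) (rho i))
      (XF k lam mu nu rho f g) := by
  constructor
  · intro c hs
    by_cases hc : Sw k f g (baseS k lam mu nu rho) c
    · rw [XF_pos hc]; exact hg.top_off c hs
    · rw [XF_neg hc]; exact hf.top_off c hs
  · intro c hs
    simp only [le_max_iff]
    by_cases hc : Sw k f g (baseS k lam mu nu rho) c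
    · rw [XF_pos hc]
      constructor
      · intro h0; exact Or.inr ((hg.zero_iff c hs).mp h0)
      · rintro (h | h)
        · exfalso
          have hgf := sw_gf hf hg hc
          rw [(hf.zero_iff c hs).mpr h] at hgf
          exact not_lt_zeroV hgf
        · exact (hg.zero_iff c hs).mpr h
    · rw [XF_neg hc]
      constructor
      · intro h0; exact Or.inl ((hf.zero_iff c hs).mp h0)
      · rintro (h | h)
        · exact (hf.zero_iff c hs).mpr h
        · by_cases h' : c.2 ≤ mu c.1
          · exact (hf.zero_iff c hs).mpr h'
          · exact absurd (Sw.base (show _ ∈ baseS k lam mu nu rho from ⟨hs, Or.inl ⟨by omega, h⟩⟩)) hc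
  · intro c hs
    simp only [max_lt_iff]
    by_cases hc : Sw k f g (baseS k lam mu nu rho) c
    · rw [XF_pos hc]
      constructor
      · intro h0
        exact absurd h0 (ne_top_of_lt (sw_gf hf hg hc))
      · rintro ⟨h1, h2⟩
        exfalso
        have hgf := sw_gf hf hg hc
        rw [(hf.top_iff c hs).mpr h1, (hg.top_iff c hs).mpr h2] at hgf
        exact lt_irrefl _ hgf
    · rw [XF_neg hc]
      constructor
      · intro h0
        have h1 := (hf.top_iff c hs).mp h0
        refine ⟨h1, ?_⟩
        by_contra h2
        exact hc (Sw.base ⟨hs, Or.inr ⟨h1, by omega⟩⟩)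
      · rintro ⟨h1, h2⟩
        exact (hf.top_iff c hs).mpr h1
  · intro i j h1 h2 hj
    have hsc : InStrip k (i, j) := ⟨h1, h2, hj⟩
    have hsd : InStrip k (i, j + 1) := ⟨h1, h2, by omega⟩
    by_cases hc : Sw k f g (baseS k lam mu nu rho) (i, j) <;>
      by_cases hd : Sw k f g (baseS k lam mu nu rho) (i, j + 1)
    · rw [XF_pos hc, XF_pos hd]; exact hg.row i j h1 h2 hj
    · rw [XF_pos hc, XF_neg hd]
      have hnb : ¬ Bad k f g (i, j) (i, j + 1) := fun hb => hd ((iff_of_bad hb).mp hc)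
      exact (crossH_of_not_bad hnb hsc hsd rfl rfl).1
    · rw [XF_neg hc, XF_pos hd]
      have hnb : ¬ Bad k f g (i, j) (i, j + 1) := fun hb => hc ((iff_of_bad hb).mpr hd)
      exact (crossH_of_not_bad hnb hsc hsd rfl rfl).2
    · rw [XF_neg hc, XF_neg hd]; exact hf.row i j h1 h2 hj
  · intro i j h1 h2 hj
    have hsc : InStrip k (i, j) := ⟨h1, by omega, hj⟩
    have hsd : InStrip k (i + 1, j) := ⟨by omega, h2, hj⟩
    by_cases hc : Sw k f g (baseS k lam mu nu rho) (i, j) <;>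
      by_cases hd : Sw k f g (baseS k lam mu nu rho) (i + 1, j)
    · rw [XF_pos hc, XF_pos hd]; exact hg.col i j h1 h2 hj
    · rw [XF_pos hc, XF_neg hd]
      have hnb : ¬ Bad k f g (i, j) (i + 1, j) := fun hb => hd ((iff_of_bad hb).mp hc)
      exact (crossV_of_not_bad hnb hsc hsd rfl rfl).1
    · rw [XF_neg hc, XF_pos hd]
      have hnb : ¬ Bad k f g (i, j) (i + 1, j) := fun hb => hc ((iff_of_bad hb).mpr hd)
      exact (crossV_of_not_bad hnb hsc hsd rfl rfl).2
    · rw [XF_neg hc, XF_neg hd]; exact hf.col i j h1 h2 hj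

lemma extOK_YF (hf : ExtOK k lam mu f) (hg : ExtOK k nu rho g) :
    ExtOK k (fun i => min (lam i) (nu i)) (fun i => min (mu i) (rho i))
      (YF k lam mu nu rho f g) := by
  constructor
  · intro c hs
    by_cases hc : Sw k f g (baseS k lam mu nu rho) c
    · rw [YF_pos hc]; exact hf.top_off c hs
    · rw [YF_neg hc]; exact hg.top_off c hs
  · intro c hs
    simp only [le_min_iff]
    by_cases hc : Sw k f g (baseS k lam mu nu rho) c
    · rw [YF_pos hc]
      constructor
      · intro h0
        exfalso
        have hgf := sw_gf hf hg hc
        rw [h0] at hgf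
        exact not_lt_zeroV hgf
      · rintro ⟨h, h'⟩; exact (hf.zero_iff c hs).mpr h
    · rw [YF_neg hc]
      constructor
      · intro h0
        have h2 := (hg.zero_iff c hs).mp h0
        refine ⟨?_, h2⟩
        by_contra h'
        exact hc (Sw.base ⟨hs, Or.inl ⟨by omega, h2⟩⟩)
      · rintro ⟨h, h'⟩; exact (hg.zero_iff c hs).mpr h'
  · intro c hs
    simp only [min_lt_iff]
    by_cases hc : Sw k f g (baseS k lam mu nu rho) c
    · rw [YF_pos hc]
      constructor
      · intro h0; exact Or.inl ((hf.top_iff c hs).mp h0)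
      · rintro (h | h)
        · exact (hf.top_iff c hs).mpr h
        · exfalso
          have hgf := sw_gf hf hg hc
          rw [(hg.top_iff c hs).mpr h] at hgf
          exact not_top_lt hgf
    · rw [YF_neg hc]
      constructor
      · intro h0; exact Or.inr ((hg.top_iff c hs).mp h0)
      · rintro (h | h)
        · by_cases h' : nu c.1 < c.2
          · exact (hg.top_iff c hs).mpr h'
          · exact absurd (Sw.base (show _ ∈ baseS k lam mu nu rho from ⟨hs, Or.inr ⟨h, by omega⟩⟩)) hc
        · exact (hg.top_iff c hs).mpr h
  · intro i j h1 h2 hj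
    have hsc : InStrip k (i, j) := ⟨h1, h2, hj⟩
    have hsd : InStrip k (i, j + 1) := ⟨h1, h2, by omega⟩
    by_cases hc : Sw k f g (baseS k lam mu nu rho) (i, j) <;>
      by_cases hd : Sw k f g (baseS k lam mu nu rho) (i, j + 1)
    · rw [YF_pos hc, YF_pos hd]; exact hf.row i j h1 h2 hj
    · rw [YF_pos hc, YF_neg hd]
      have hnb : ¬ Bad k f g (i, j) (i, j + 1) := fun hb => hd ((iff_of_bad hb).mp hc)
      exact (crossH_of_not_bad hnb hsc hsd rfl rfl).2
    · rw [YF_neg hc, YF_pos hd]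
      have hnb : ¬ Bad k f g (i, j) (i, j + 1) := fun hb => hc ((iff_of_bad hb).mpr hd)
      exact (crossH_of_not_bad hnb hsc hsd rfl rfl).1
    · rw [YF_neg hc, YF_neg hd]; exact hg.row i j h1 h2 hj
  · intro i j h1 h2 hj
    have hsc : InStrip k (i, j) := ⟨h1, by omega, hj⟩
    have hsd : InStrip k (i + 1, j) := ⟨by omega, h2, hj⟩
    by_cases hc : Sw k f g (baseS k lam mu nu rho) (i, j) <;>
      by_cases hd : Sw k f g (baseS k lam mu nu rho) (i + 1, j)
    · rw [YF_pos hc, YF_pos hd]; exact hf.col i j h1 h2 hj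
    · rw [YF_pos hc, YF_neg hd]
      have hnb : ¬ Bad k f g (i, j) (i + 1, j) := fun hb => hd ((iff_of_bad hb).mp hc)
      exact (crossV_of_not_bad hnb hsc hsd rfl rfl).2
    · rw [YF_neg hc, YF_pos hd]
      have hnb : ¬ Bad k f g (i, j) (i + 1, j) := fun hb => hc ((iff_of_bad hb).mpr hd)
      exact (crossV_of_not_bad hnb hsc hsd rfl rfl).1
    · rw [YF_neg hc, YF_neg hd]; exact hg.col i j h1 h2 hj

lemma bad_XY_both {c d} (hcd : Sw k f g (baseS k lam mu nu rho) c ↔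
      Sw k f g (baseS k lam mu nu rho) d) :
    Bad k (XF k lam mu nu rho f g) (YF k lam mu nu rho f g) c d ↔ Bad k f g c d := by
  by_cases hc : Sw k f g (baseS k lam mu nu rho) c
  · have hd := hcd.mp hc
    unfold Bad
    rw [XF_pos hc, XF_pos hd, YF_pos hc, YF_pos hd]
    tauto
  · have hd := fun h => hc (hcd.mpr h)
    unfold Bad
    rw [XF_neg hc, XF_neg hd, YF_neg hc, YF_neg hd]

lemma not_bad_XY_mix (hf : ExtOK k lam mu f) (hg : ExtOK k nu rho g) {c d}
    (hcd : ¬ (Sw k f g (baseS k lam mu nu rho) c ↔ Sw k f g (baseS k lam mu nu rho) d)) :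
    ¬ Bad k (XF k lam mu nu rho f g) (YF k lam mu nu rho f g) c d := by
  rintro ⟨hsc, hsd, hcl⟩
  by_cases hc : Sw k f g (baseS k lam mu nu rho) c <;>
    by_cases hd : Sw k f g (baseS k lam mu nu rho) d
  · exact hcd ⟨fun _ => hd, fun _ => hc⟩
  · rcases hcl with ⟨h1, h2, hn⟩ | ⟨h1, h2, hn⟩
    · refine hn ⟨?_, ?_⟩
      · rw [YF_pos hc, XF_neg hd]; exact hf.row' hsc h1 h2
      · rw [XF_pos hc, YF_neg hd]; exact hg.row' hsc h1 h2
    · refine hn ⟨?_, ?_⟩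
      · rw [YF_pos hc, XF_neg hd]; exact hf.col' hsc hsd.2.1 h1 h2
      · rw [XF_pos hc, YF_neg hd]; exact hg.col' hsc hsd.2.1 h1 h2
  · rcases hcl with ⟨h1, h2, hn⟩ | ⟨h1, h2, hn⟩
    · refine hn ⟨?_, ?_⟩
      · rw [YF_neg hc, XF_pos hd]; exact hg.row' hsc h1 h2
      · rw [XF_neg hc, YF_pos hd]; exact hf.row' hsc h1 h2
    · refine hn ⟨?_, ?_⟩
      · rw [YF_neg hc, XF_pos hd]; exact hg.col' hsc hsd.2.1 h1 h2
      · rw [XF_neg hc, YF_pos hd]; exact hf.col' hsc hsd.2.1 h1 h2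
  · exact hcd ⟨fun h => absurd h hc, fun h => absurd h hd⟩

lemma sw_XY_iff (hf : ExtOK k lam mu f) (hg : ExtOK k nu rho g) (c : ℕ × ℕ) :
    Sw k (XF k lam mu nu rho f g) (YF k lam mu nu rho f g) (baseS k lam mu nu rho) c ↔
      Sw k f g (baseS k lam mu nu rho) c := by
  constructor
  · intro h
    induction h with
    | @base c h => exact Sw.base h
    | @fwd c d hc hbad ih =>
        by_cases hd : Sw k f g (baseS k lam mu nu rho) d
        · exact hd
        · exact absurd hbad (not_bad_XY_mix hf hg (by tauto))
    | @bwd c d hd hbad ih =>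
        by_cases hc : Sw k f g (baseS k lam mu nu rho) c
        · exact hc
        · exact absurd hbad (not_bad_XY_mix hf hg (by tauto))
  · intro h
    induction h with
    | @base c h => exact Sw.base h
    | @fwd c d hc hbad ih =>
        exact Sw.fwd ih ((bad_XY_both (iff_of_bad hbad)).mpr hbad)
    | @bwd c d hd hbad ih =>
        exact Sw.bwd ih ((bad_XY_both (iff_of_bad hbad)).mpr hbad)

lemma swap_back_f (hf : ExtOK k lam mu f) (hg : ExtOK k nu rho g) (c : ℕ × ℕ) :
    swapF (XF k lam mu nu rho f g) (YF k lam mu nu rho f g)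
      (Sw k (XF k lam mu nu rho f g) (YF k lam mu nu rho f g) (baseS k lam mu nu rho)) c
      = f c := by
  unfold swapF
  by_cases hc : Sw k f g (baseS k lam mu nu rho) c
  · rw [if_pos ((sw_XY_iff hf hg c).mpr hc), YF_pos hc]
  · rw [if_neg (fun h => hc ((sw_XY_iff hf hg c).mp h)), XF_neg hc]

lemma swap_back_g (hf : ExtOK k lam mu f) (hg : ExtOK k nu rho g) (c : ℕ × ℕ) :
    swapF (YF k lam mu nu rho f g) (XF k lam mu nu rho f g)
      (Sw k (XF k lam mu nu rho f g) (YF k lam mu nu rho f g) (baseS k lam mu nu rho)) c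
      = g c := by
  unfold swapF
  by_cases hc : Sw k f g (baseS k lam mu nu rho) c
  · rw [if_pos ((sw_XY_iff hf hg c).mpr hc), XF_pos hc]
  · rw [if_neg (fun h => hc ((sw_XY_iff hf hg c).mp h)), YF_neg hc]

end Master
end
end CT

namespace CT
noncomputable section
attribute [local instance] Classical.propDecidable

lemma exists_pnat {x : V} (h0 : x ≠ 0) (ht : x ≠ ⊤) : ∃ m : ℕ+, x = ((m : ℕ) : V) := by
  obtain ⟨n, hn⟩ := WithTop.ne_top_iff_exists.mp ht
  have hn0 : n ≠ 0 := by rintro rfl; rw [← hn] at h0; simp at h0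
  refine ⟨⟨n, Nat.pos_of_ne_zero hn0⟩, ?_⟩
  exact_mod_cast hn.symm

def restrF (k : ℕ) (a b : ℕ → ℕ) (X : ℕ × ℕ → V) : skewCells k a b → ℕ+ :=
  fun x => Nat.toPNat' ((X x.1).untopD 0)

lemma extOK_int {k : ℕ} {a b : ℕ → ℕ} {X : ℕ × ℕ → V} (hX : ExtOK k a b X) {c : ℕ × ℕ}
    (hc : c ∈ skewCells k a b) : ∃ m : ℕ+, X c = ((m : ℕ) : V) := by
  have hs : InStrip k c := mem_strip hc
  refine exists_pnat ?_ ?_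
  · intro h0; have h1 := (hX.zero_iff c hs).mp h0; have := hc.2.2.1; omega
  · intro h0; have h1 := (hX.top_iff c hs).mp h0; have := hc.2.2.2; omega

lemma restrF_coe {k : ℕ} {a b : ℕ → ℕ} {X : ℕ × ℕ → V} (hX : ExtOK k a b X) {c : ℕ × ℕ}
    (hc : c ∈ skewCells k a b) : ((restrF k a b X ⟨c, hc⟩ : ℕ) : V) = X c := by
  obtain ⟨m, hm⟩ := extOK_int hX hc
  show ((Nat.toPNat' ((X c).untopD 0) : ℕ) : V) = X c
  have hu : WithTop.untopD 0 (((m : ℕ) : ℕ) : V) = (m : ℕ) := by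
    have := WithTop.untopD_coe 0 (m : ℕ)
    exact_mod_cast this
  rw [hm, hu, PNat.coe_toPNat']

lemma isSSYT_restrF {k : ℕ} {a b : ℕ → ℕ} {X : ℕ × ℕ → V} (hX : ExtOK k a b X) :
    IsSSYT (skewCells k a b) (restrF k a b X) := by
  constructor
  · rintro ⟨c, hc⟩ ⟨c', hc'⟩ h1 h2
    have hr := hX.row' (mem_strip hc) (d := c') h1.symm h2.symm
    have hcc := restrF_coe hX hc
    have hcc' := restrF_coe hX hc'
    rw [← hcc, ← hcc'] at hr
    exact_mod_cast hr
  · rintro ⟨c, hc⟩ ⟨c', hc'⟩ h1 h2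
    have hcol := hX.col' (mem_strip hc) hc'.2.1 h1.symm h2.symm
    have hcc := restrF_coe hX hc
    have hcc' := restrF_coe hX hc'
    rcases hcol with h | ⟨h0, _⟩ | ⟨ht, _⟩
    · rw [← hcc, ← hcc'] at h; exact_mod_cast h
    · rw [← hcc] at h0; exact absurd h0 (coe_pnat_ne_zero _)
    · rw [← hcc] at ht; exact absurd ht (coe_pnat_ne_top _)

lemma hatF_restrF {k : ℕ} {a b : ℕ → ℕ} {X : ℕ × ℕ → V} (hX : ExtOK k a b X) :
    hatF k a b (restrF k a b X) = X := by
  funext c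
  by_cases hm : c ∈ skewCells k a b
  · rw [hatF_mem hm, restrF_coe hX hm]
  · rw [hatF, dif_neg hm]
    by_cases hs : InStrip k c
    · by_cases h2 : c.2 ≤ b c.1
      · rw [if_pos ⟨hs, h2⟩]
        exact ((hX.zero_iff c hs).mpr h2).symm
      · rw [if_neg (by tauto)]
        have ht : a c.1 < c.2 := by
          have h1 := hs.1; have hk := hs.2.1; have hj := hs.2.2
          simp [skewCells] at hm
          omega
        exact ((hX.top_iff c hs).mpr ht).symm
    · rw [if_neg (by tauto)]
      exact (hX.top_off c hs).symm

lemma skew_finite (k : ℕ) (a b : ℕ → ℕ) : (skewCells k a b).Finite := by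
  apply Set.Finite.subset (Set.finite_Icc ((1, 1) : ℕ × ℕ) (k, (Finset.Icc 1 k).sup a))
  rintro ⟨i, j⟩ hm
  obtain ⟨h1, h2, h3, h4⟩ := hm
  rw [Set.mem_Icc, Prod.mk_le_mk, Prod.mk_le_mk]
  refine ⟨⟨h1, by omega⟩, ⟨h2, le_trans h4 (Finset.le_sup (f := a) ?_)⟩⟩
  simp only [Finset.mem_Icc]
  omega

def eqvHat (k : ℕ) (a b : ℕ → ℕ) (U : skewCells k a b → ℕ+) (n : ℕ+) :
    {x : skewCells k a b // U x = n} ≃ {c : ℕ × ℕ // hatF k a b U c = ((n : ℕ) : V)} where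
  toFun p := ⟨p.1.1, hatF_eq_coe_iff.mpr ⟨p.1.2, p.2⟩⟩
  invFun q := ⟨⟨q.1, (hatF_eq_coe_iff.mp q.2).choose⟩, (hatF_eq_coe_iff.mp q.2).choose_spec⟩
  left_inv p := Subtype.ext (Subtype.ext rfl)
  right_inv q := Subtype.ext rfl

def eqvSwap (p q : ℕ × ℕ → V) (S : ℕ × ℕ → Prop) (v : V) :
    {c : ℕ × ℕ // p c = v} ⊕ {c : ℕ × ℕ // q c = v} ≃
      {c : ℕ × ℕ // swapF p q S c = v} ⊕ {c : ℕ × ℕ // swapF q p S c = v} where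
  toFun x := match x with
    | Sum.inl ⟨c, h⟩ =>
        if hc : S c then Sum.inr ⟨c, by simp [swapF, hc, h]⟩
        else Sum.inl ⟨c, by simp [swapF, hc, h]⟩
    | Sum.inr ⟨c, h⟩ =>
        if hc : S c then Sum.inl ⟨c, by simp [swapF, hc, h]⟩
        else Sum.inr ⟨c, by simp [swapF, hc, h]⟩
  invFun x := match x with
    | Sum.inl ⟨c, h⟩ =>
        if hc : S c then Sum.inr ⟨c, by simpa [swapF, hc] using h⟩
        else Sum.inl ⟨c, by simpa [swapF, hc] using h⟩
    | Sum.inr ⟨c, h⟩ =>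
        if hc : S c then Sum.inl ⟨c, by simpa [swapF, hc] using h⟩
        else Sum.inr ⟨c, by simpa [swapF, hc] using h⟩
  left_inv := by rintro (⟨c, h⟩ | ⟨c, h⟩) <;> by_cases hc : S c <;> simp [hc]
  right_inv := by rintro (⟨c, h⟩ | ⟨c, h⟩) <;> by_cases hc : S c <;> simp [hc]

end
end CT

namespace CT
noncomputable section
attribute [local instance] Classical.propDecidable

lemma finite_wt_class {D1 D2 : Set (ℕ × ℕ)} (h1 : D1.Finite) (h2 : D2.Finite)
    (P1 : (D1 → ℕ+) → Prop) (P2 : (D2 → ℕ+) → Prop) {d : ℕ+ → ℕ}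
    (hd : (Function.support d).Finite) :
    Finite {p : (D1 → ℕ+) × (D2 → ℕ+) //
      P1 p.1 ∧ P2 p.2 ∧ ∀ n, wtFun p.1 n + wtFun p.2 n = d n} := by
  haveI := h1.to_subtype
  haveI := h2.to_subtype
  have mem1 : ∀ (p : {p : (D1 → ℕ+) × (D2 → ℕ+) //
      P1 p.1 ∧ P2 p.2 ∧ ∀ n, wtFun p.1 n + wtFun p.2 n = d n}) (x : D1),
      p.1.1 x ∈ hd.toFinset := by
    intro p x
    rw [Set.Finite.mem_toFinset, Function.mem_support]
    intro h0
    have hw := p.2.2.2 (p.1.1 x)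
    rw [h0] at hw
    have hpos : 0 < wtFun p.1.1 (p.1.1 x) := by
      have : Nonempty {y : D1 // p.1.1 y = p.1.1 x} := ⟨⟨x, rfl⟩⟩
      exact Nat.card_pos
    have hw1 : wtFun p.1.1 (p.1.1 x) + wtFun p.1.2 (p.1.1 x) = 0 := hw
    omega
  have mem2 : ∀ (p : {p : (D1 → ℕ+) × (D2 → ℕ+) //
      P1 p.1 ∧ P2 p.2 ∧ ∀ n, wtFun p.1 n + wtFun p.2 n = d n}) (x : D2),
      p.1.2 x ∈ hd.toFinset := by
    intro p x
    rw [Set.Finite.mem_toFinset, Function.mem_support]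
    intro h0
    have hw := p.2.2.2 (p.1.2 x)
    rw [h0] at hw
    have hpos : 0 < wtFun p.1.2 (p.1.2 x) := by
      have : Nonempty {y : D2 // p.1.2 y = p.1.2 x} := ⟨⟨x, rfl⟩⟩
      exact Nat.card_pos
    have hw1 : wtFun p.1.1 (p.1.2 x) + wtFun p.1.2 (p.1.2 x) = 0 := hw
    omega
  refine Finite.of_injective
    (β := (D1 → hd.toFinset) × (D2 → hd.toFinset))
    (fun p => (fun x => ⟨p.1.1 x, mem1 p x⟩, fun x => ⟨p.1.2 x, mem2 p x⟩)) ?_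
  intro a b hab
  rw [Prod.ext_iff] at hab
  apply Subtype.ext
  rw [Prod.ext_iff]
  constructor
  · funext x
    exact congrArg Subtype.val (congrFun hab.1 x)
  · funext x
    exact congrArg Subtype.val (congrFun hab.2 x)

end
end CT

/-- for partitions `μ ⊆ λ`, `ρ ⊆ ν` with at most `k` parts, there is
a weight-preserving injection from pairs of semistandard tableaux of shapes
`(λ/μ, ν/ρ)` to pairs of shapes `(max(λ/μ,ν/ρ), min(λ/μ,ν/ρ))`; consequently
`s_{max(λ/μ,ν/ρ)} s_{min(λ/μ,ν/ρ)} − s_{λ/μ} s_{ν/ρ}` is monomial-positive. -/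
theorem cellTransfer_minmax (k : ℕ) (lam mu nu rho : ℕ → ℕ)
    (hlam : IsPartitionK k lam) (hmu : IsPartitionK k mu)
    (hnu : IsPartitionK k nu) (hrho : IsPartitionK k rho)
    (hml : ∀ i, 1 ≤ i → i ≤ k → mu i ≤ lam i)
    (hrn : ∀ i, 1 ≤ i → i ≤ k → rho i ≤ nu i) :
    (∃ F : {U : skewCells k lam mu → ℕ+ // IsSSYT (skewCells k lam mu) U} ×
          {T : skewCells k nu rho → ℕ+ // IsSSYT (skewCells k nu rho) T} →
        {U' : skewCells k (fun i => max (lam i) (nu i)) (fun i => max (mu i) (rho i)) → ℕ+ //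
            IsSSYT (skewCells k (fun i => max (lam i) (nu i)) (fun i => max (mu i) (rho i))) U'} ×
          {T' : skewCells k (fun i => min (lam i) (nu i)) (fun i => min (mu i) (rho i)) → ℕ+ //
            IsSSYT (skewCells k (fun i => min (lam i) (nu i)) (fun i => min (mu i) (rho i))) T'},
      Function.Injective F ∧
        ∀ p, ∀ n : ℕ+,
          wtFun (p.1 : skewCells k lam mu → ℕ+) n +
              wtFun (p.2 : skewCells k nu rho → ℕ+) n =
            wtFun ((F p).1 : skewCells k (fun i => max (lam i) (nu i))
                (fun i => max (mu i) (rho i)) → ℕ+) n +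
              wtFun ((F p).2 : skewCells k (fun i => min (lam i) (nu i))
                (fun i => min (mu i) (rho i)) → ℕ+) n) ∧
      ∀ d : ℕ+ → ℕ, (Function.support d).Finite →
        Nat.card {p : (skewCells k lam mu → ℕ+) × (skewCells k nu rho → ℕ+) //
            IsSSYT (skewCells k lam mu) p.1 ∧ IsSSYT (skewCells k nu rho) p.2 ∧
              ∀ n, wtFun p.1 n + wtFun p.2 n = d n} ≤
          Nat.card {p :
              (skewCells k (fun i => max (lam i) (nu i)) (fun i => max (mu i) (rho i)) → ℕ+) ×
              (skewCells k (fun i => min (lam i) (nu i)) (fun i => min (mu i) (rho i)) → ℕ+) //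
            IsSSYT (skewCells k (fun i => max (lam i) (nu i)) (fun i => max (mu i) (rho i))) p.1 ∧
              IsSSYT (skewCells k (fun i => min (lam i) (nu i)) (fun i => min (mu i) (rho i))) p.2 ∧
              ∀ n, wtFun p.1 n + wtFun p.2 n = d n} := by
  
  classical
  let bigF : ({U : skewCells k lam mu → ℕ+ // IsSSYT (skewCells k lam mu) U} ×
        {T : skewCells k nu rho → ℕ+ // IsSSYT (skewCells k nu rho) T}) →
      ({U' : skewCells k (fun i => max (lam i) (nu i)) (fun i => max (mu i) (rho i)) → ℕ+ //
          IsSSYT (skewCells k (fun i => max (lam i) (nu i)) (fun i => max (mu i) (rho i))) U'} ×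
        {T' : skewCells k (fun i => min (lam i) (nu i)) (fun i => min (mu i) (rho i)) → ℕ+ //
          IsSSYT (skewCells k (fun i => min (lam i) (nu i)) (fun i => min (mu i) (rho i))) T'}) :=
    fun p =>
      (⟨CT.restrF k (fun i => max (lam i) (nu i)) (fun i => max (mu i) (rho i))
          (CT.XF k lam mu nu rho (CT.hatF k lam mu p.1.1) (CT.hatF k nu rho p.2.1)),
        CT.isSSYT_restrF (CT.extOK_XF (CT.hatF_extOK hlam hmu hml p.1.2)
          (CT.hatF_extOK hnu hrho hrn p.2.2))⟩,
       ⟨CT.restrF k (fun i => min (lam i) (nu i)) (fun i => min (mu i) (rho i))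
          (CT.YF k lam mu nu rho (CT.hatF k lam mu p.1.1) (CT.hatF k nu rho p.2.1)),
        CT.isSSYT_restrF (CT.extOK_YF (CT.hatF_extOK hlam hmu hml p.1.2)
          (CT.hatF_extOK hnu hrho hrn p.2.2))⟩)
  have hinj : Function.Injective bigF := by
    intro p₁ p₂ h
    have hf1 := CT.hatF_extOK hlam hmu hml p₁.1.2
    have hg1 := CT.hatF_extOK hnu hrho hrn p₁.2.2
    have hf2 := CT.hatF_extOK hlam hmu hml p₂.1.2
    have hg2 := CT.hatF_extOK hnu hrho hrn p₂.2.2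
    have h1 : CT.restrF k (fun i => max (lam i) (nu i)) (fun i => max (mu i) (rho i))
          (CT.XF k lam mu nu rho (CT.hatF k lam mu p₁.1.1) (CT.hatF k nu rho p₁.2.1)) =
        CT.restrF k (fun i => max (lam i) (nu i)) (fun i => max (mu i) (rho i))
          (CT.XF k lam mu nu rho (CT.hatF k lam mu p₂.1.1) (CT.hatF k nu rho p₂.2.1)) :=
      congrArg (fun z => z.1.1) h
    have h2 : CT.restrF k (fun i => min (lam i) (nu i)) (fun i => min (mu i) (rho i))
          (CT.YF k lam mu nu rho (CT.hatF k lam mu p₁.1.1) (CT.hatF k nu rho p₁.2.1)) =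
        CT.restrF k (fun i => min (lam i) (nu i)) (fun i => min (mu i) (rho i))
          (CT.YF k lam mu nu rho (CT.hatF k lam mu p₂.1.1) (CT.hatF k nu rho p₂.2.1)) :=
      congrArg (fun z => z.2.1) h
    have hX : CT.XF k lam mu nu rho (CT.hatF k lam mu p₁.1.1) (CT.hatF k nu rho p₁.2.1) =
        CT.XF k lam mu nu rho (CT.hatF k lam mu p₂.1.1) (CT.hatF k nu rho p₂.2.1) := by
      rw [← CT.hatF_restrF (CT.extOK_XF hf1 hg1), ← CT.hatF_restrF (CT.extOK_XF hf2 hg2), h1]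
    have hY : CT.YF k lam mu nu rho (CT.hatF k lam mu p₁.1.1) (CT.hatF k nu rho p₁.2.1) =
        CT.YF k lam mu nu rho (CT.hatF k lam mu p₂.1.1) (CT.hatF k nu rho p₂.2.1) := by
      rw [← CT.hatF_restrF (CT.extOK_YF hf1 hg1), ← CT.hatF_restrF (CT.extOK_YF hf2 hg2), h2]
    have hfeq : CT.hatF k lam mu p₁.1.1 = CT.hatF k lam mu p₂.1.1 := by
      funext c
      rw [← CT.swap_back_f hf1 hg1 c, ← CT.swap_back_f hf2 hg2 c, hX, hY]
    have hgeq : CT.hatF k nu rho p₁.2.1 = CT.hatF k nu rho p₂.2.1 := by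
      funext c
      rw [← CT.swap_back_g hf1 hg1 c, ← CT.swap_back_g hf2 hg2 c, hX, hY]
    have hU : p₁.1.1 = p₂.1.1 := by
      funext x
      have hc := congrFun hfeq x.1
      rw [CT.hatF_mem x.2, CT.hatF_mem x.2] at hc
      rw [Nat.cast_withTop, Nat.cast_withTop] at hc
      exact PNat.coe_inj.mp (WithTop.coe_inj.mp hc)
    have hT : p₁.2.1 = p₂.2.1 := by
      funext x
      have hc := congrFun hgeq x.1
      rw [CT.hatF_mem x.2, CT.hatF_mem x.2] at hc
      rw [Nat.cast_withTop, Nat.cast_withTop] at hc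
      exact PNat.coe_inj.mp (WithTop.coe_inj.mp hc)
    exact Prod.ext_iff.mpr ⟨Subtype.ext hU, Subtype.ext hT⟩
  have hwt : ∀ (p : {U : skewCells k lam mu → ℕ+ // IsSSYT (skewCells k lam mu) U} ×
        {T : skewCells k nu rho → ℕ+ // IsSSYT (skewCells k nu rho) T}), ∀ n : ℕ+,
      wtFun (p.1 : skewCells k lam mu → ℕ+) n + wtFun (p.2 : skewCells k nu rho → ℕ+) n =
        wtFun (CT.restrF k (fun i => max (lam i) (nu i)) (fun i => max (mu i) (rho i))
            (CT.XF k lam mu nu rho (CT.hatF k lam mu p.1.1) (CT.hatF k nu rho p.2.1))) n +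
          wtFun (CT.restrF k (fun i => min (lam i) (nu i)) (fun i => min (mu i) (rho i))
            (CT.YF k lam mu nu rho (CT.hatF k lam mu p.1.1) (CT.hatF k nu rho p.2.1))) n := by
    intro p n
    have hf := CT.hatF_extOK hlam hmu hml p.1.2
    have hg := CT.hatF_extOK hnu hrho hrn p.2.2
    haveI i1 : Finite (skewCells k lam mu) := (CT.skew_finite k lam mu).to_subtype
    haveI i2 : Finite (skewCells k nu rho) := (CT.skew_finite k nu rho).to_subtype
    haveI i3 : Finite (skewCells k (fun i => max (lam i) (nu i))
        (fun i => max (mu i) (rho i))) := (CT.skew_finite _ _ _).to_subtype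
    haveI i4 : Finite (skewCells k (fun i => min (lam i) (nu i))
        (fun i => min (mu i) (rho i))) := (CT.skew_finite _ _ _).to_subtype
    simp only [wtFun]
    rw [← Nat.card_sum, ← Nat.card_sum]
    refine Nat.card_congr ?_
    refine (Equiv.sumCongr (CT.eqvHat k lam mu p.1.1 n) (CT.eqvHat k nu rho p.2.1 n)).trans ?_
    refine (CT.eqvSwap (CT.hatF k lam mu p.1.1) (CT.hatF k nu rho p.2.1)
        (CT.Sw k (CT.hatF k lam mu p.1.1) (CT.hatF k nu rho p.2.1)
          (CT.baseS k lam mu nu rho)) ((n : ℕ) : CT.V)).trans ?_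
    refine (Equiv.sumCongr ?_ ?_).symm
    · refine (CT.eqvHat k (fun i => max (lam i) (nu i)) (fun i => max (mu i) (rho i))
        (CT.restrF k (fun i => max (lam i) (nu i)) (fun i => max (mu i) (rho i))
          (CT.XF k lam mu nu rho (CT.hatF k lam mu p.1.1) (CT.hatF k nu rho p.2.1))) n).trans
        (Equiv.subtypeEquivRight (fun c => ?_))
      rw [CT.hatF_restrF (CT.extOK_XF hf hg)]
      exact Iff.rfl
    · refine (CT.eqvHat k (fun i => min (lam i) (nu i)) (fun i => min (mu i) (rho i))
        (CT.restrF k (fun i => min (lam i) (nu i)) (fun i => min (mu i) (rho i))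
          (CT.YF k lam mu nu rho (CT.hatF k lam mu p.1.1) (CT.hatF k nu rho p.2.1))) n).trans
        (Equiv.subtypeEquivRight (fun c => ?_))
      rw [CT.hatF_restrF (CT.extOK_YF hf hg)]
      exact Iff.rfl
  refine ⟨⟨bigF, hinj, hwt⟩, ?_⟩
  intro d hd
  haveI hB : Finite {p :
      (skewCells k (fun i => max (lam i) (nu i)) (fun i => max (mu i) (rho i)) → ℕ+) ×
      (skewCells k (fun i => min (lam i) (nu i)) (fun i => min (mu i) (rho i)) → ℕ+) //
      IsSSYT (skewCells k (fun i => max (lam i) (nu i)) (fun i => max (mu i) (rho i))) p.1 ∧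
        IsSSYT (skewCells k (fun i => min (lam i) (nu i)) (fun i => min (mu i) (rho i))) p.2 ∧
        ∀ n, wtFun p.1 n + wtFun p.2 n = d n} :=
    CT.finite_wt_class (CT.skew_finite _ _ _) (CT.skew_finite _ _ _) _ _ hd
  refine Nat.card_le_card_of_injective
    (fun p => ⟨((bigF (⟨p.1.1, p.2.1⟩, ⟨p.1.2, p.2.2.1⟩)).1.1,
                (bigF (⟨p.1.1, p.2.1⟩, ⟨p.1.2, p.2.2.1⟩)).2.1),
      (bigF (⟨p.1.1, p.2.1⟩, ⟨p.1.2, p.2.2.1⟩)).1.2,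
      (bigF (⟨p.1.1, p.2.1⟩, ⟨p.1.2, p.2.2.1⟩)).2.2,
      fun n => ((hwt (⟨p.1.1, p.2.1⟩, ⟨p.1.2, p.2.2.1⟩) n).symm.trans (p.2.2.2 n))⟩) ?_
  intro a b hab
  have hv := Subtype.ext_iff.mp hab
  have h1 : bigF (⟨a.1.1, a.2.1⟩, ⟨a.1.2, a.2.2.1⟩) = bigF (⟨b.1.1, b.2.1⟩, ⟨b.1.2, b.2.2.1⟩) :=
    Prod.ext_iff.mpr ⟨Subtype.ext (congrArg Prod.fst hv), Subtype.ext (congrArg Prod.snd hv)⟩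
  have h2 := hinj h1
  apply Subtype.ext
  apply Prod.ext_iff.mpr
  exact ⟨congrArg (fun z => z.1.1) h2, congrArg (fun z => z.2.1) h2⟩
end
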